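/- arXiv:2103.08276 — 2 statements merged into one kernel-verified Lean document; each statement's English description precedes it below -/
import Mathlib

section
/- Let R be a ring with local units, P a locally projective unitary left R-module, and S a subring of End_R(P) such that P is a unitary right S-module, S·End_R(P) = S, and Pf is a finitely generated left R-module for every idempotent f ∈ S. Let M be a unitary left R-module and N an injective object in RMod with st_P(N) = 0. Then the map Hom_R(M,N) → Hom_S(SHom_R(P,M), SHom_R(P,N)), g ↦ SHom_R(P,g), is an isomorphism of abelian groups. -/
set_option linter.unusedVariables false

/-! ### Core: non-unital rings with local units, modules, homomorphisms, categories -/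

universe u v w

open MulOpposite CategoryTheory

/-- A ring with local units: every finite subset is contained in a subring
of the form `eRe` for an idempotent `e`; equivalently, every finite subset
admits an idempotent acting as a two-sided identity on it. -/
class HasLocalUnits (R : Type u) [NonUnitalRing R] : Prop where
  exists_unit : ∀ s : Finset R, ∃ e : R, e * e = e ∧ ∀ x ∈ s, e * x = x ∧ x * e = x

/-- A (left) module over a non-unital ring. -/
class LMod (R : Type u) [NonUnitalRing R] (M : Type v) [AddCommGroup M] extends SMul R M where
  smul_add' : ∀ (r : R) (m n : M), r • (m + n) = r • m + r • n
  add_smul' : ∀ (r s : R) (m : M), (r + s) • m = r • m + s • m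
  mul_smul' : ∀ (r s : R) (m : M), (r * s) • m = r • (s • m)

section basic
variable {R : Type u} [NonUnitalRing R] {M : Type v} [AddCommGroup M] [LMod R M]

theorem LMod.smul_zero' (r : R) : r • (0 : M) = 0 := by
  have h := LMod.smul_add' r (0 : M) 0
  rw [add_zero] at h
  have h2 : r • (0 : M) + r • (0 : M) = r • (0 : M) + 0 := by rw [← h, add_zero]
  exact add_left_cancel h2

theorem LMod.zero_smul' (m : M) : (0 : R) • m = 0 := by
  have h := LMod.add_smul' (0 : R) 0 m
  rw [add_zero] at h
  have h2 : (0 : R) • m + (0 : R) • m = (0 : R) • m + 0 := by rw [← h, add_zero]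
  exact add_left_cancel h2

theorem LMod.smul_neg' (r : R) (m : M) : r • (-m) = -(r • m) := by
  have h : r • m + r • (-m) = 0 := by
    rw [← LMod.smul_add' r m (-m), add_neg_cancel, LMod.smul_zero']
  exact eq_neg_of_add_eq_zero_right h

end basic

/-- `f : M → N` is a homomorphism of (non-unital) `R`-modules. -/
structure IsLHom (R : Type u) [NonUnitalRing R] {M : Type v} {N : Type w}
    [AddCommGroup M] [AddCommGroup N] [LMod R M] [LMod R N] (f : M → N) : Prop where
  map_add : ∀ x y, f (x + y) = f x + f y
  map_smul : ∀ (r : R) (x : M), f (r • x) = r • f x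

theorem IsLHom.map_zero {R : Type u} [NonUnitalRing R] {M : Type v} {N : Type w}
    [AddCommGroup M] [AddCommGroup N] [LMod R M] [LMod R N] {f : M → N}
    (hf : IsLHom R f) : f 0 = 0 := by
  have h := hf.map_add 0 0
  rw [add_zero] at h
  have h2 : f 0 + f 0 = f 0 + 0 := by rw [← h, add_zero]
  exact add_left_cancel h2

theorem IsLHom.map_neg {R : Type u} [NonUnitalRing R] {M : Type v} {N : Type w}
    [AddCommGroup M] [AddCommGroup N] [LMod R M] [LMod R N] {f : M → N}
    (hf : IsLHom R f) (x : M) : f (-x) = -(f x) := by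
  have h : f x + f (-x) = 0 := by rw [← hf.map_add, add_neg_cancel, hf.map_zero]
  exact eq_neg_of_add_eq_zero_right h

/-- The type of homomorphisms of (non-unital) `R`-modules. -/
def LinMap (R : Type u) [NonUnitalRing R] (M : Type v) (N : Type w)
    [AddCommGroup M] [AddCommGroup N] [LMod R M] [LMod R N] : Type (max v w) :=
  {f : M → N // IsLHom R f}

namespace LinMap

variable {R : Type u} [NonUnitalRing R] {M : Type v} {N : Type w}
    [AddCommGroup M] [AddCommGroup N] [LMod R M] [LMod R N]

theorem ext {f g : LinMap R M N} (h : f.1 = g.1) : f = g := Subtype.ext h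

instance : Add (LinMap R M N) :=
  ⟨fun f g => ⟨fun x => f.1 x + g.1 x,
    ⟨fun x y => by rw [f.2.map_add, g.2.map_add]; abel,
     fun r x => by rw [f.2.map_smul, g.2.map_smul, LMod.smul_add']⟩⟩⟩

instance : Zero (LinMap R M N) :=
  ⟨⟨fun _ => 0, ⟨fun _ _ => by rw [add_zero], fun r _ => (LMod.smul_zero' r).symm⟩⟩⟩

instance : Neg (LinMap R M N) :=
  ⟨fun f => ⟨fun x => -(f.1 x),
    ⟨fun x y => by rw [f.2.map_add]; abel,
     fun r x => by rw [f.2.map_smul, LMod.smul_neg']⟩⟩⟩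

instance : AddCommGroup (LinMap R M N) where
  add_assoc f g h := ext (funext fun x => add_assoc _ _ _)
  zero_add f := ext (funext fun x => zero_add _)
  add_zero f := ext (funext fun x => add_zero _)
  add_comm f g := ext (funext fun x => add_comm _ _)
  neg_add_cancel f := ext (funext fun x => neg_add_cancel _)
  nsmul := nsmulRec
  zsmul := zsmulRec

@[simp] theorem add_apply (f g : LinMap R M N) (x : M) : (f + g).1 x = f.1 x + g.1 x := rfl
@[simp] theorem zero_apply (x : M) : (0 : LinMap R M N).1 x = 0 := rfl
@[simp] theorem neg_apply (f : LinMap R M N) (x : M) : (-f).1 x = -(f.1 x) := rfl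

end LinMap

/-- The endomorphism ring of a module over a non-unital ring, with the
"diagrammatic" multiplication `(f * g) x = g (f x)` (i.e. `f * g` means
"first `f`, then `g`", matching homomorphisms written on the right). -/
instance LinMap.instNonUnitalRing {R : Type u} [NonUnitalRing R] {M : Type v}
    [AddCommGroup M] [LMod R M] : NonUnitalRing (LinMap R M M) :=
  { (inferInstance : AddCommGroup (LinMap R M M)) with
    mul := fun f g => ⟨fun x => g.1 (f.1 x),
      ⟨fun x y => by rw [f.2.map_add, g.2.map_add], fun r x => by rw [f.2.map_smul, g.2.map_smul]⟩⟩
    left_distrib := fun f g h => LinMap.ext (funext fun x => rfl)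
    right_distrib := fun f g h => LinMap.ext (funext fun x => h.2.map_add _ _)
    zero_mul := fun f => LinMap.ext (funext fun x => f.2.map_zero)
    mul_zero := fun f => LinMap.ext (funext fun x => rfl)
    mul_assoc := fun f g h => LinMap.ext (funext fun x => rfl) }

@[simp] theorem LinMap.mul_apply {R : Type u} [NonUnitalRing R] {M : Type v}
    [AddCommGroup M] [LMod R M] (f g : LinMap R M M) (x : M) : (f * g).1 x = g.1 (f.1 x) := rfl

/-- A module `M` over a non-unital ring `R` is unitary if `RM = M`. -/
def IsUnitary (R : Type u) [NonUnitalRing R] (M : Type v) [AddCommGroup M] [LMod R M] : Prop :=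
  ∀ m : M, m ∈ AddSubgroup.closure {x : M | ∃ (r : R) (n : M), x = r • n}

/-- The `R`-submodule (as an additive subgroup) generated by a subset. -/
def lspan (R : Type u) [NonUnitalRing R] {M : Type v} [AddCommGroup M] [LMod R M]
    (X : Set M) : AddSubgroup M :=
  AddSubgroup.closure (X ∪ {m | ∃ (r : R) (x : M), x ∈ X ∧ m = r • x})

/-- A subset `A` of a module is finitely generated (as an `R`-submodule). -/
def IsFGSet (R : Type u) [NonUnitalRing R] {M : Type v} [AddCommGroup M] [LMod R M]
    (A : Set M) : Prop :=
  ∃ s : Finset M, (↑s : Set M) ⊆ A ∧ ∀ a ∈ A, a ∈ lspan R (↑s : Set M)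

/-- A finitely generated module over a non-unital ring. -/
def IsFG (R : Type u) [NonUnitalRing R] (M : Type v) [AddCommGroup M] [LMod R M] : Prop :=
  ∃ s : Finset M, ∀ m : M, m ∈ lspan R (↑s : Set M)

/-- The category of unitary left modules over a ring with local units
(objects: unitary left `R`-modules). -/
structure UMod (R : Type u) [NonUnitalRing R] : Type (max u (v + 1)) where
  carrier : Type v
  [grp : AddCommGroup carrier]
  [mod : LMod R carrier]
  unitary : IsUnitary R carrier

attribute [instance] UMod.grp UMod.mod

instance {R : Type u} [NonUnitalRing R] : CoeSort (UMod.{u, v} R) (Type v) := ⟨UMod.carrier⟩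

instance UMod.instCategory {R : Type u} [NonUnitalRing R] : Category (UMod.{u, v} R) where
  Hom M N := LinMap R M.carrier N.carrier
  id M := ⟨fun x => x, ⟨fun _ _ => rfl, fun _ _ => rfl⟩⟩
  comp f g := ⟨fun x => g.1 (f.1 x),
    ⟨fun x y => by rw [f.2.map_add, g.2.map_add], fun r x => by rw [f.2.map_smul, g.2.map_smul]⟩⟩
  id_comp f := LinMap.ext rfl
  comp_id f := LinMap.ext rfl
  assoc f g h := LinMap.ext rfl

@[simp] theorem UMod.comp_apply {R : Type u} [NonUnitalRing R] {M N K : UMod.{u, v} R}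
    (f : M ⟶ N) (g : N ⟶ K) (x : M.carrier) : (f ≫ g).1 x = g.1 (f.1 x) := rfl

@[simp] theorem UMod.id_apply {R : Type u} [NonUnitalRing R] {M : UMod.{u, v} R}
    (x : M.carrier) : (𝟙 M : M ⟶ M).1 x = x := rfl

instance UMod.instPreadditive {R : Type u} [NonUnitalRing R] :
    Preadditive (UMod.{u, v} R) where
  homGroup M N := inferInstanceAs (AddCommGroup (LinMap R M.carrier N.carrier))
  add_comp M N K f f' g := LinMap.ext (funext fun x => g.2.map_add _ _)
  comp_add M N K f g g' := LinMap.ext (funext fun x => rfl)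

/-- A unitary module `P` is a generator of the category of unitary left `R`-modules. -/
def IsGenerator (R : Type u) [NonUnitalRing R] (P : UMod.{u, v} R) : Prop :=
  ∀ (M B : UMod.{u, v} R) (f g : M ⟶ B), f ≠ g → ∃ h : P ⟶ M, h ≫ f ≠ h ≫ g

/-- A set of unitary modules is a cogenerating set for the category of
unitary left `R`-modules. -/
def IsCogenSet (R : Type u) [NonUnitalRing R] (𝒰 : Set (UMod.{u, v} R)) : Prop :=
  ∀ (B M : UMod.{u, v} R) (f g : B ⟶ M), f ≠ g → ∃ U' ∈ 𝒰, ∃ h : M ⟶ U', f ≫ h ≠ g ≫ h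
/-! ### The largest unitary submodule `C·H` of a module `H`, and induced
module structures on hom-groups -/

section umax

variable (C : Type u) [NonUnitalRing C] (H : Type v) [AddCommGroup H] [LMod C H]

/-- `C·H`, the largest unitary `C`-submodule of the `C`-module `H`. -/
def umax : AddSubgroup H :=
  AddSubgroup.closure {h : H | ∃ (c : C) (h' : H), h = c • h'}

variable {C H}

theorem smul_mem_umax (c : C) (h : H) : c • h ∈ umax C H :=
  AddSubgroup.subset_closure ⟨c, h, rfl⟩

/-- An additive, `C`-equivariant map carries `C·H` into `C·H'`. -/
theorem umax_mapsTo {H' : Type w} [AddCommGroup H'] [LMod C H'] (T : H → H')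
    (hadd : ∀ x y, T (x + y) = T x + T y) (hsmul : ∀ (c : C) (x : H), T (c • x) = c • T x)
    {h : H} (hh : h ∈ umax C H) : T h ∈ umax C H' := by
  have hT : IsLHom C T := ⟨hadd, hsmul⟩
  induction hh using AddSubgroup.closure_induction with
  | mem x hx =>
    obtain ⟨c, h', rfl⟩ := hx
    rw [hsmul]; exact smul_mem_umax c (T h')
  | zero => rw [hT.map_zero]; exact (umax C H').zero_mem
  | add x y hx hy ihx ihy => rw [hadd]; exact (umax C H').add_mem ihx ihy
  | neg x hx ihx => rw [hT.map_neg]; exact (umax C H').neg_mem ihx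

instance umax.instLMod : LMod C ↥(umax C H) where
  smul c h := ⟨c • h.1, smul_mem_umax c h.1⟩
  smul_add' c m n := Subtype.ext (LMod.smul_add' c m.1 n.1)
  add_smul' c c' m := Subtype.ext (LMod.add_smul' c c' m.1)
  mul_smul' c c' m := Subtype.ext (LMod.mul_smul' c c' m.1)

@[simp] theorem umax.smul_coe (c : C) (h : ↥(umax C H)) : (c • h).1 = c • h.1 := rfl

/-- If a second ring `D` acts on `H` commuting with the `C`-action,
then `C·H` is stable under the `D`-action. -/
theorem umax_stable {D : Type w} [NonUnitalRing D] [LMod D H] [SMulCommClass C D H]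
    (d : D) {h : H} (hh : h ∈ umax C H) : d • h ∈ umax C H :=
  umax_mapsTo (fun x => d • x) (fun x y => LMod.smul_add' d x y)
    (fun c x => (smul_comm c d x).symm) hh

instance umax.instLMod₂ {D : Type w} [NonUnitalRing D] [LMod D H] [SMulCommClass C D H] :
    LMod D ↥(umax C H) where
  smul d h := ⟨d • h.1, umax_stable d h.2⟩
  smul_add' d m n := Subtype.ext (LMod.smul_add' d m.1 n.1)
  add_smul' d d' m := Subtype.ext (LMod.add_smul' d d' m.1)
  mul_smul' d d' m := Subtype.ext (LMod.mul_smul' d d' m.1)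

instance umax.instSMulCommClass {D : Type w} [NonUnitalRing D] [LMod D H]
    [SMulCommClass C D H] : SMulCommClass C D ↥(umax C H) :=
  ⟨fun c d h => Subtype.ext (smul_comm c d h.1)⟩

/-- If `C` has local units, then `C·H` is a unitary `C`-module. -/
theorem umax_unitary [HasLocalUnits C] : IsUnitary C ↥(umax C H) := by
  intro m
  obtain ⟨h, hh⟩ := m
  induction hh using AddSubgroup.closure_induction with
  | mem x hx =>
    obtain ⟨c, h', rfl⟩ := hx
    obtain ⟨e, he, hec⟩ := HasLocalUnits.exists_unit {c}
    have hc := (hec c (Finset.mem_singleton_self c)).1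
    refine AddSubgroup.subset_closure ⟨e, ⟨c • h', smul_mem_umax c h'⟩, ?_⟩
    refine Subtype.ext ?_
    show c • h' = e • (c • h')
    rw [← LMod.mul_smul', hc]
  | zero =>
    have : (⟨(0 : H), (umax C H).zero_mem⟩ : ↥(umax C H)) = 0 := rfl
    rw [this]; exact AddSubgroup.zero_mem _
  | add x y hx hy ihx ihy =>
    have : (⟨x + y, (umax C H).add_mem hx hy⟩ : ↥(umax C H)) =
        ⟨x, hx⟩ + ⟨y, hy⟩ := rfl
    rw [this]; exact AddSubgroup.add_mem _ ihx ihy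
  | neg x hx ihx =>
    have : (⟨-x, (umax C H).neg_mem hx⟩ : ↥(umax C H)) = -⟨x, hx⟩ := rfl
    rw [this]; exact AddSubgroup.neg_mem _ ihx

end umax

section regular

variable (R : Type u) [NonUnitalRing R]

/-- The left regular module structure of a non-unital ring on itself. -/
instance NonUnitalRing.instLModSelf : LMod R R where
  smul := (· * ·)
  smul_add' := mul_add
  add_smul' := add_mul
  mul_smul' := mul_assoc

@[simp] theorem NonUnitalRing.smul_def (r s : R) : r • s = r * s := rfl

/-- The right regular module structure, as a left module over the opposite ring. -/
instance NonUnitalRing.instLModSelfOp : LMod Rᵐᵒᵖ R where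
  smul r s := s * r.unop
  smul_add' r m n := add_mul m n r.unop
  add_smul' r r' m := mul_add m r.unop r'.unop
  mul_smul' r r' m := (mul_assoc m r'.unop r.unop).symm

@[simp] theorem NonUnitalRing.op_smul_def (r : Rᵐᵒᵖ) (s : R) : r • s = s * r.unop := rfl

instance : SMulCommClass R Rᵐᵒᵖ R :=
  ⟨fun r s x => by
    show r * (x * s.unop) = (r * x) * s.unop
    rw [mul_assoc]⟩

/-- Local units pass to the opposite ring. -/
instance instHasLocalUnitsOp [HasLocalUnits R] : HasLocalUnits Rᵐᵒᵖ where
  exists_unit s := by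
    classical
    obtain ⟨e, he, h⟩ := HasLocalUnits.exists_unit (R := R) (s.image MulOpposite.unop)
    refine ⟨MulOpposite.op e, by rw [← MulOpposite.op_mul, he], fun x hx => ?_⟩
    have hx' := h x.unop (Finset.mem_image_of_mem MulOpposite.unop hx)
    constructor
    · conv_lhs => rw [← MulOpposite.op_unop x, ← MulOpposite.op_mul, hx'.2, MulOpposite.op_unop]
    · conv_lhs => rw [← MulOpposite.op_unop x, ← MulOpposite.op_mul, hx'.1, MulOpposite.op_unop]

end regular

section homact

variable {A B C : Type u} [NonUnitalRing A] [NonUnitalRing B] [NonUnitalRing C]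
variable {X : Type v} {Y : Type w} [AddCommGroup X] [AddCommGroup Y] [LMod B X] [LMod B Y]

/-- The action of `A` on `Hom_B(X, Y)` by precomposition with the right
`A`-action on `X` (homomorphisms written on the right: `(a • f) x = f (x·a)`). -/
instance LinMap.instLModPre [LMod Aᵐᵒᵖ X] [SMulCommClass B Aᵐᵒᵖ X] :
    LMod A (LinMap B X Y) where
  smul a f := ⟨fun x => f.1 (op a • x),
    ⟨fun x y => by rw [LMod.smul_add', f.2.map_add],
     fun r x => by rw [← smul_comm r (op a) x, f.2.map_smul]⟩⟩
  smul_add' a f g := LinMap.ext rfl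
  add_smul' a a' f := LinMap.ext (funext fun x => by
    show f.1 (op (a + a') • x) = f.1 (op a • x) + f.1 (op a' • x)
    rw [← f.2.map_add, ← LMod.add_smul']
    rfl)
  mul_smul' a a' f := LinMap.ext (funext fun x => by
    show f.1 (op (a * a') • x) = f.1 (op a' • (op a • x))
    rw [← LMod.mul_smul']
    rfl)

theorem LinMap.pre_smul_apply [LMod Aᵐᵒᵖ X] [SMulCommClass B Aᵐᵒᵖ X]
    (a : A) (f : LinMap B X Y) (x : X) : (a • f).1 x = f.1 (op a • x) := rfl

/-- The action of `C` on `Hom_B(X, Y)` by postcomposition with a commuting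
`C`-action on `Y`. -/
instance LinMap.instLModPost [LMod C Y] [SMulCommClass B C Y] :
    LMod C (LinMap B X Y) where
  smul c f := ⟨fun x => c • f.1 x,
    ⟨fun x y => by rw [f.2.map_add, LMod.smul_add'],
     fun r x => by rw [f.2.map_smul]; exact (smul_comm r c (f.1 x)).symm⟩⟩
  smul_add' c f g := LinMap.ext (funext fun x => LMod.smul_add' c (f.1 x) (g.1 x))
  add_smul' c c' f := LinMap.ext (funext fun x => LMod.add_smul' c c' (f.1 x))
  mul_smul' c c' f := LinMap.ext (funext fun x => LMod.mul_smul' c c' (f.1 x))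

theorem LinMap.post_smul_apply [LMod C Y] [SMulCommClass B C Y]
    (c : C) (f : LinMap B X Y) (x : X) : (c • f).1 x = c • (f.1 x) := rfl

/-- Pre- and postcomposition actions on hom-groups commute. -/
instance LinMap.instSMulCommClassPrePost [LMod Aᵐᵒᵖ X] [SMulCommClass B Aᵐᵒᵖ X]
    [LMod C Y] [SMulCommClass B C Y] : SMulCommClass A C (LinMap B X Y) :=
  ⟨fun a c f => LinMap.ext rfl⟩

end homact
/-! ### Split direct systems and direct limits of unitary modules -/

section dirsys

variable (R : Type u) [NonUnitalRing R]

/-- A split direct system of unitary left `R`-modules, indexed by a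
quasi-ordered set `(ι, rel)`: a direct system `(P_i, φ_{ij})` together with
splittings `ψ_{ji} : P_j → P_i` (for `i ≤ j`) such that `φ_{ij} ψ_{ji} = id`
and `ψ_{kj} ψ_{ji} = ψ_{ki}`. -/
structure SplitSystem (ι : Type w) (rel : ι → ι → Prop) : Type (max u w (v + 1)) where
  obj : ι → UMod.{u, v} R
  map : ∀ {i j : ι}, rel i j → (obj i ⟶ obj j)
  split : ∀ {i j : ι}, rel i j → (obj j ⟶ obj i)
  map_self : ∀ {i : ι} (h : rel i i) (x : (obj i).carrier), (map h).1 x = x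
  map_map : ∀ {i j k : ι} (hij : rel i j) (hjk : rel j k) (hik : rel i k)
    (x : (obj i).carrier), (map hjk).1 ((map hij).1 x) = (map hik).1 x
  split_map : ∀ {i j : ι} (h : rel i j) (x : (obj i).carrier),
    (split h).1 ((map h).1 x) = x
  split_split : ∀ {i j k : ι} (hij : rel i j) (hjk : rel j k) (hik : rel i k)
    (x : (obj k).carrier), (split hij).1 ((split hjk).1 x) = (split hik).1 x

/-- `P`, together with homomorphisms `φ_i : P_i → P`, is a direct limit of the
direct system `(P_i, φ_{ij})` (with directed index set): the `φ_i` are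
compatible, every element of `P` comes from some `P_i`, and everything killed
by `φ_i` is eventually killed in the system. -/
structure LimitCocone {ι : Type w} {rel : ι → ι → Prop} (D : SplitSystem.{u, v} R ι rel)
    (P : Type v) [AddCommGroup P] [LMod R P] : Type (max u w v) where
  incl : ∀ i, LinMap R (D.obj i).carrier P
  compat : ∀ {i j : ι} (h : rel i j) (x : (D.obj i).carrier),
    (incl j).1 ((D.map h).1 x) = (incl i).1 x
  exhaustive : ∀ x : P, ∃ (i : ι) (y : (D.obj i).carrier), (incl i).1 y = x
  eventually_zero : ∀ i (y : (D.obj i).carrier), (incl i).1 y = 0 →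
    ∃ j, ∃ h : rel i j, (D.map h).1 y = 0

/-- A unitary left `R`-module is locally projective if it is a direct limit of a
split direct system of finitely generated projective unitary left `R`-modules. -/
def IsLocallyProjective (P : Type v) [AddCommGroup P] [LMod R P] : Prop :=
  ∃ (ι : Type v) (rel : ι → ι → Prop),
    (∀ i, rel i i) ∧ (∀ {i j k}, rel i j → rel j k → rel i k) ∧
    Nonempty ι ∧ (∀ i j, ∃ k, rel i k ∧ rel j k) ∧
    ∃ (D : SplitSystem.{u, v} R ι rel) (_ : LimitCocone R D P),
      ∀ i, IsFG R (D.obj i).carrier ∧ CategoryTheory.Projective (D.obj i)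

variable {R}

/-- The transition maps `Ω_{ij} : End_R(P_i) → End_R(P_j)`, `α ↦ ψ_{ji} α φ_{ij}`,
of the direct system of endomorphism rings associated to a split direct system. -/
def SplitSystem.endTrans {ι : Type w} {rel : ι → ι → Prop}
    (D : SplitSystem.{u, v} R ι rel) {i j : ι} (h : rel i j)
    (a : LinMap R (D.obj i).carrier (D.obj i).carrier) :
    LinMap R (D.obj j).carrier (D.obj j).carrier :=
  ⟨fun x => (D.map h).1 (a.1 ((D.split h).1 x)),
   ⟨fun x y => by rw [(D.split h).2.map_add, a.2.map_add, (D.map h).2.map_add],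
    fun r x => by rw [(D.split h).2.map_smul, a.2.map_smul, (D.map h).2.map_smul]⟩⟩

end dirsys
/-! ### The functor `SHom_R(P,−)` and related constructions for a bimodule `P` -/

section shom

variable (R S : Type u) [NonUnitalRing R] [NonUnitalRing S]
variable (P : Type u) [AddCommGroup P] [LMod R P] [LMod Sᵐᵒᵖ P] [SMulCommClass R Sᵐᵒᵖ P]

/-- `SHom_R(P,M) = S·Hom_R(P,M)`, the largest unitary left `S`-submodule of
`Hom_R(P,M)`, as a type. -/
abbrev SHom (M : Type u) [AddCommGroup M] [LMod R M] : Type u :=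
  ↥(umax S (LinMap R P M))

variable {R S P}

/-- The action of `SHom_R(P,−)` on a homomorphism `g : M → N` (postcomposition). -/
def sHomMap {M N : Type u} [AddCommGroup M] [AddCommGroup N] [LMod R M] [LMod R N]
    (g : LinMap R M N) (α : SHom R S P M) : SHom R S P N :=
  ⟨⟨fun x => g.1 (α.1.1 x),
    ⟨fun x y => by rw [α.1.2.map_add, g.2.map_add],
     fun r x => by rw [α.1.2.map_smul, g.2.map_smul]⟩⟩,
   umax_mapsTo (C := S)
     (fun f => ⟨fun x => g.1 (f.1 x),
       ⟨fun x y => by rw [f.2.map_add, g.2.map_add],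
        fun r x => by rw [f.2.map_smul, g.2.map_smul]⟩⟩)
     (fun f f' => LinMap.ext (funext fun x => g.2.map_add _ _))
     (fun s f => LinMap.ext rfl) α.2⟩

theorem sHomMap_apply {M N : Type u} [AddCommGroup M] [AddCommGroup N] [LMod R M]
    [LMod R N] (g : LinMap R M N) (α : SHom R S P M) (x : P) :
    ((sHomMap g α).1).1 x = g.1 (α.1.1 x) := rfl

theorem sHomMap_add {M N : Type u} [AddCommGroup M] [AddCommGroup N] [LMod R M]
    [LMod R N] (g : LinMap R M N) (α β : SHom R S P M) :
    sHomMap g (α + β) = sHomMap g α + sHomMap g β :=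
  Subtype.ext (LinMap.ext (funext fun x =>
    show g.1 (α.1.1 x + β.1.1 x) = g.1 (α.1.1 x) + g.1 (β.1.1 x) from g.2.map_add _ _))

theorem sHomMap_smul {M N : Type u} [AddCommGroup M] [AddCommGroup N] [LMod R M]
    [LMod R N] (g : LinMap R M N) (s : S) (α : SHom R S P M) :
    sHomMap g (s • α) = s • sHomMap g α :=
  Subtype.ext (LinMap.ext (funext fun x => rfl))

/-- `SHom_R(P,g)` as a homomorphism of `S`-modules. -/
def sHomLin {M N : Type u} [AddCommGroup M] [AddCommGroup N] [LMod R M] [LMod R N]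
    (g : LinMap R M N) : LinMap S (SHom R S P M) (SHom R S P N) :=
  ⟨sHomMap g, ⟨sHomMap_add g, fun s α => sHomMap_smul g s α⟩⟩

variable (R S P)

/-- The functor `SHom_R(P,−)` from unitary left `R`-modules to unitary left
`S`-modules. -/
def sHomF [HasLocalUnits S] : UMod.{u, u} R ⥤ UMod.{u, u} S where
  obj M := ⟨SHom R S P M.carrier, umax_unitary⟩
  map g := sHomLin g
  map_id M := LinMap.ext (funext fun α => Subtype.ext (LinMap.ext (funext fun x => rfl)))
  map_comp f g := LinMap.ext (funext fun α => Subtype.ext (LinMap.ext (funext fun x => rfl)))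

/-- `G_P = SHom_R(P,R)`, an `S`-`R`-bimodule. -/
abbrev GP : Type u := ↥(umax S (LinMap R P R))

/-- `RHom_S(G_P, N) = R·Hom_S(G_P, N)`, as a type. -/
abbrev RHomG (N : Type u) [AddCommGroup N] [LMod S N] : Type u :=
  ↥(umax R (LinMap S (GP R S P) N))

variable {R S P}

/-- The action of `RHom_S(G_P,−)` on a homomorphism of `S`-modules. -/
def rHomGMap {N N' : Type u} [AddCommGroup N] [AddCommGroup N'] [LMod S N] [LMod S N']
    (g : LinMap S N N') (α : RHomG R S P N) : RHomG R S P N' :=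
  ⟨⟨fun β => g.1 (α.1.1 β),
    ⟨fun x y => by rw [α.1.2.map_add, g.2.map_add],
     fun s x => by rw [α.1.2.map_smul, g.2.map_smul]⟩⟩,
   umax_mapsTo (C := R)
     (fun f => ⟨fun β => g.1 (f.1 β),
       ⟨fun x y => by rw [f.2.map_add, g.2.map_add],
        fun s x => by rw [f.2.map_smul, g.2.map_smul]⟩⟩)
     (fun f f' => LinMap.ext (funext fun β => g.2.map_add _ _))
     (fun r f => LinMap.ext rfl) α.2⟩

variable (R S P)

/-- The functor `RHom_S(G_P,−)` from unitary left `S`-modules to unitary left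
`R`-modules. -/
def rHomGF [HasLocalUnits R] : UMod.{u, u} S ⥤ UMod.{u, u} R where
  obj N := ⟨RHomG R S P N.carrier, umax_unitary⟩
  map g := ⟨rHomGMap g,
    ⟨fun α β => Subtype.ext (LinMap.ext (funext fun x =>
       show g.1 (α.1.1 x + β.1.1 x) = g.1 (α.1.1 x) + g.1 (β.1.1 x) from g.2.map_add _ _)),
     fun r α => Subtype.ext (LinMap.ext (funext fun x => rfl))⟩⟩
  map_id N := LinMap.ext (funext fun α => Subtype.ext (LinMap.ext (funext fun x => rfl)))
  map_comp f g := LinMap.ext (funext fun α => Subtype.ext (LinMap.ext (funext fun x => rfl)))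

variable {R S P}

/-- The inner component of the evaluation map `γ`: for `n ∈ N` and
`β ∈ Hom_R(P,R)`, the homomorphism `P → N`, `x ↦ (x)β·n`. -/
def gammaInner {N : Type u} [AddCommGroup N] [LMod R N] (n : N) (β : LinMap R P R) :
    LinMap R P N :=
  ⟨fun x => (β.1 x) • n,
   ⟨fun x y => by rw [β.2.map_add, LMod.add_smul'],
    fun r x => by rw [β.2.map_smul, NonUnitalRing.smul_def, LMod.mul_smul']⟩⟩

theorem gammaInner_mem {N : Type u} [AddCommGroup N] [LMod R N] (n : N)
    {β : LinMap R P R} (hβ : β ∈ umax S (LinMap R P R)) :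
    gammaInner n β ∈ umax S (LinMap R P N) :=
  umax_mapsTo (C := S) (fun β => gammaInner n β)
    (fun β β' => LinMap.ext (funext fun x => LMod.add_smul' _ _ _))
    (fun s β => LinMap.ext rfl) hβ

variable (R S P)

/-- The evaluation map `γ_N : N → RHom_S(G_P, SHom_R(P,N))` (before checking that
its values lie in the unitary part `R·Hom_S(G_P, SHom_R(P,N))`):
`n ↦ (β ↦ (x ↦ (x)β·n))`. -/
def gammaFun (N : Type u) [AddCommGroup N] [LMod R N] (n : N) :
    LinMap S (GP R S P) (SHom R S P N) :=
  ⟨fun β => ⟨gammaInner n β.1, gammaInner_mem n β.2⟩,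
   ⟨fun β β' => Subtype.ext (LinMap.ext (funext fun x => LMod.add_smul' _ _ _)),
    fun s β => Subtype.ext (LinMap.ext rfl)⟩⟩

/-- The `s`-trace `sTr(P,M) = Σ_{g ∈ SHom_R(P,M)} Im g` of `P` in `M`. -/
def sTrSub (M : Type u) [AddCommGroup M] [LMod R M] : AddSubgroup M :=
  AddSubgroup.closure {m : M | ∃ f : LinMap R P M, f ∈ umax S (LinMap R P M) ∧ ∃ x : P, m = f.1 x}

/-- `st_P(M) = 0`: the only `R`-submodule `K ⊆ M` with `SHom_R(P,K) = 0` is the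
zero submodule (equivalently, the sum of all such submodules is zero). -/
def stPZero (M : Type u) [AddCommGroup M] [LMod R M] : Prop :=
  ∀ K : AddSubgroup M, (∀ (r : R) (x : M), x ∈ K → r • x ∈ K) →
    (∀ (s : S) (f : LinMap R P M), (∀ x : P, f.1 x ∈ K) → s • f = 0) →
    ∀ m ∈ K, m = 0

/-- `SHom_R(P,X) = 0`. -/
def sHomZero (X : Type u) [AddCommGroup X] [LMod R X] : Prop :=
  ∀ f : LinMap R P X, f ∈ umax S (LinMap R P X) → f = 0

end shom
/-! ### Bimodules, dual hom functors, reflexivity, Morita duality bimodules,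
finiteness conditions -/

section bimod

variable (R S : Type u) [NonUnitalRing R] [NonUnitalRing S]

/-- A bundled `R`-`S`-bimodule over non-unital rings. -/
structure BimodLU : Type (u + 1) where
  carrier : Type u
  [grp : AddCommGroup carrier]
  [lmod : LMod R carrier]
  [rmod : LMod Sᵐᵒᵖ carrier]
  [comm : SMulCommClass R Sᵐᵒᵖ carrier]
  [comm' : SMulCommClass Sᵐᵒᵖ R carrier]

attribute [instance] BimodLU.grp BimodLU.lmod BimodLU.rmod BimodLU.comm BimodLU.comm'

variable (U : Type u) [AddCommGroup U] [LMod R U] [LMod Sᵐᵒᵖ U] [SMulCommClass R Sᵐᵒᵖ U]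
  [SMulCommClass Sᵐᵒᵖ R U]

/-- The canonical map `μ : S → End_R(U)`, `s ↦ (x ↦ x·s)`. -/
def muMap (s : S) : LinMap R U U :=
  ⟨fun x => op s • x,
   ⟨fun x y => LMod.smul_add' (op s) x y, fun r x => (smul_comm r (op s) x).symm⟩⟩

/-- The canonical map `λ : R → End_S(U)`, `r ↦ (x ↦ r·x)`. -/
def lambdaMap (r : R) : LinMap Sᵐᵒᵖ U U :=
  ⟨fun x => r • x,
   ⟨fun x y => LMod.smul_add' r x y, fun s x => smul_comm r s x⟩⟩

/-- `Hom_R(M,U)S`, the largest unitary right `S`-submodule of `Hom_R(M,U)`,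
as a type (a right `S`-module, i.e. a left `Sᵐᵒᵖ`-module). -/
abbrev DHomL (M : Type u) [AddCommGroup M] [LMod R M] : Type u :=
  ↥(umax Sᵐᵒᵖ (LinMap R M U))

/-- `RHom_S(N,U)`, the largest unitary left `R`-submodule of `Hom_S(N,U)`
for a right `S`-module `N`, as a type. -/
abbrev DHomR (N : Type u) [AddCommGroup N] [LMod Sᵐᵒᵖ N] : Type u :=
  ↥(umax R (LinMap Sᵐᵒᵖ N U))

variable {R S U}

/-- Action of the contravariant functor `Hom_R(−,U)S` on morphisms
(precomposition). -/
def dHomLMap {M N : Type u} [AddCommGroup M] [AddCommGroup N] [LMod R M] [LMod R N]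
    (f : LinMap R M N) (α : DHomL R S U N) : DHomL R S U M :=
  ⟨⟨fun x => α.1.1 (f.1 x),
    ⟨fun x y => by rw [f.2.map_add, α.1.2.map_add],
     fun r x => by rw [f.2.map_smul, α.1.2.map_smul]⟩⟩,
   umax_mapsTo (C := Sᵐᵒᵖ)
     (fun g => ⟨fun x => g.1 (f.1 x),
       ⟨fun x y => by rw [f.2.map_add, g.2.map_add],
        fun r x => by rw [f.2.map_smul, g.2.map_smul]⟩⟩)
     (fun g g' => LinMap.ext rfl) (fun s g => LinMap.ext rfl) α.2⟩

/-- Action of the contravariant functor `RHom_S(−,U)` on morphisms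
(precomposition). -/
def dHomRMap {M N : Type u} [AddCommGroup M] [AddCommGroup N] [LMod Sᵐᵒᵖ M]
    [LMod Sᵐᵒᵖ N] (f : LinMap Sᵐᵒᵖ M N) (α : DHomR R S U N) : DHomR R S U M :=
  ⟨⟨fun x => α.1.1 (f.1 x),
    ⟨fun x y => by rw [f.2.map_add, α.1.2.map_add],
     fun s x => by rw [f.2.map_smul, α.1.2.map_smul]⟩⟩,
   umax_mapsTo (C := R)
     (fun g => ⟨fun x => g.1 (f.1 x),
       ⟨fun x y => by rw [f.2.map_add, g.2.map_add],
        fun s x => by rw [f.2.map_smul, g.2.map_smul]⟩⟩)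
     (fun g g' => LinMap.ext rfl) (fun r g => LinMap.ext rfl) α.2⟩

variable (R S U)

/-- The contravariant functor `Hom_R(−,U)S` from unitary left `R`-modules to
unitary right `S`-modules. -/
def dualL [HasLocalUnits S] : (UMod.{u, u} R)ᵒᵖ ⥤ UMod.{u, u} Sᵐᵒᵖ where
  obj M := ⟨DHomL R S U M.unop.carrier, umax_unitary⟩
  map f := ⟨dHomLMap f.unop,
    ⟨fun α β => Subtype.ext (LinMap.ext (funext fun x => rfl)),
     fun s α => Subtype.ext (LinMap.ext (funext fun x => rfl))⟩⟩
  map_id M := LinMap.ext (funext fun α => Subtype.ext (LinMap.ext (funext fun x => rfl)))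
  map_comp f g := LinMap.ext (funext fun α => Subtype.ext (LinMap.ext (funext fun x => rfl)))

/-- The contravariant functor `RHom_S(−,U)` from unitary right `S`-modules to
unitary left `R`-modules. -/
def dualR [HasLocalUnits R] : (UMod.{u, u} Sᵐᵒᵖ)ᵒᵖ ⥤ UMod.{u, u} R where
  obj N := ⟨DHomR R S U N.unop.carrier, umax_unitary⟩
  map f := ⟨dHomRMap f.unop,
    ⟨fun α β => Subtype.ext (LinMap.ext (funext fun x => rfl)),
     fun r α => Subtype.ext (LinMap.ext (funext fun x => rfl))⟩⟩
  map_id N := LinMap.ext (funext fun α => Subtype.ext (LinMap.ext (funext fun x => rfl)))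
  map_comp f g := LinMap.ext (funext fun α => Subtype.ext (LinMap.ext (funext fun x => rfl)))

/-- The underlying function of the evaluation map
`φ_X : X → RHom_S(Hom_R(X,U)S, U)`, `(x)φ_X : β ↦ (x)β`. -/
def evalFunL (X : Type u) [AddCommGroup X] [LMod R X] (x : X) :
    LinMap Sᵐᵒᵖ (DHomL R S U X) U :=
  ⟨fun β => β.1.1 x, ⟨fun β β' => rfl, fun s β => rfl⟩⟩

/-- A unitary left `R`-module `X` is `U`-reflexive: the evaluation map
`φ_X : X → RHom_S(Hom_R(X,U)S, U)` is an isomorphism. -/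
def IsLReflexive (X : Type u) [AddCommGroup X] [LMod R X] : Prop :=
  ∃ h : ∀ x : X, evalFunL R S U X x ∈ umax R (LinMap Sᵐᵒᵖ (DHomL R S U X) U),
    Function.Bijective (fun x : X => (⟨evalFunL R S U X x, h x⟩ : DHomR R S U (DHomL R S U X)))

/-- The underlying function of the evaluation map
`ψ_Y : Y → Hom_R(RHom_S(Y,U),U)S`, `ψ_Y(y) : α ↦ α(y)`. -/
def evalFunR (Y : Type u) [AddCommGroup Y] [LMod Sᵐᵒᵖ Y] (y : Y) :
    LinMap R (DHomR R S U Y) U :=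
  ⟨fun α => α.1.1 y, ⟨fun α α' => rfl, fun r α => rfl⟩⟩

/-- A unitary right `S`-module `Y` is `U`-reflexive: the evaluation map
`ψ_Y : Y → Hom_R(RHom_S(Y,U),U)S` is an isomorphism. -/
def IsRReflexive (Y : Type u) [AddCommGroup Y] [LMod Sᵐᵒᵖ Y] : Prop :=
  ∃ h : ∀ y : Y, evalFunR R S U Y y ∈ umax Sᵐᵒᵖ (LinMap R (DHomR R S U Y) U),
    Function.Bijective (fun y : Y => (⟨evalFunR R S U Y y, h y⟩ : DHomL R S U (DHomR R S U Y)))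

/-- Properties (I) and (II) of a Morita duality bimodule: `U` is the direct
limit of a split direct system of finitely generated injective unitary left
`R`-modules whose members form a cogenerating set for the category of unitary
left `R`-modules, and `μ : S → End_R(U)` is a monomorphism whose image is
exactly the set of endomorphisms factoring through one of the induced
projections. -/
def SatisfiesI_II : Prop :=
  ∃ (ι : Type u) (rel : ι → ι → Prop),
    (∀ i, rel i i) ∧ (∀ {i j k}, rel i j → rel j k → rel i k) ∧
    Nonempty ι ∧ (∀ i j, ∃ k, rel i k ∧ rel j k) ∧
    ∃ (D : SplitSystem.{u, u} R ι rel) (c : LimitCocone R D U)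
      (proj : ∀ i, LinMap R U (D.obj i).carrier),
      (∀ i, IsFG R (D.obj i).carrier ∧ CategoryTheory.Injective (D.obj i)) ∧
      IsCogenSet R {M | ∃ i, M = D.obj i} ∧
      (∀ i (x : (D.obj i).carrier), (proj i).1 ((c.incl i).1 x) = x) ∧
      (∀ {i j} (h : rel i j) (x : U), (D.split h).1 ((proj j).1 x) = (proj i).1 x) ∧
      Function.Injective (muMap R S U) ∧
      Set.range (muMap R S U) =
        {g : LinMap R U U | ∃ (i : ι) (γ : LinMap R (D.obj i).carrier U),
          g.1 = fun x => γ.1 ((proj i).1 x)}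

/-- Properties (III) and (IV) of a Morita duality bimodule (the right-module
side, dual to (I) and (II)). -/
def SatisfiesIII_IV : Prop :=
  ∃ (ι : Type u) (rel : ι → ι → Prop),
    (∀ i, rel i i) ∧ (∀ {i j k}, rel i j → rel j k → rel i k) ∧
    Nonempty ι ∧ (∀ i j, ∃ k, rel i k ∧ rel j k) ∧
    ∃ (D : SplitSystem.{u, u} Sᵐᵒᵖ ι rel) (c : LimitCocone Sᵐᵒᵖ D U)
      (proj : ∀ i, LinMap Sᵐᵒᵖ U (D.obj i).carrier),
      (∀ i, IsFG Sᵐᵒᵖ (D.obj i).carrier ∧ CategoryTheory.Injective (D.obj i)) ∧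
      IsCogenSet Sᵐᵒᵖ {M | ∃ i, M = D.obj i} ∧
      (∀ i (x : (D.obj i).carrier), (proj i).1 ((c.incl i).1 x) = x) ∧
      (∀ {i j} (h : rel i j) (x : U), (D.split h).1 ((proj j).1 x) = (proj i).1 x) ∧
      Function.Injective (lambdaMap R S U) ∧
      Set.range (lambdaMap R S U) =
        {g : LinMap Sᵐᵒᵖ U U | ∃ (i : ι) (γ : LinMap Sᵐᵒᵖ (D.obj i).carrier U),
          g.1 = fun x => γ.1 ((proj i).1 x)}

/-- A Morita duality `R`-`S`-bimodule. -/
def IsMoritaDualityBimod : Prop :=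
  IsUnitary R U ∧ IsUnitary Sᵐᵒᵖ U ∧ SatisfiesI_II R S U ∧ SatisfiesIII_IV R S U

end bimod

section cats

variable (R : Type u) [NonUnitalRing R]

/-- The category of finitely generated unitary left `R`-modules. -/
abbrev FGMod := CategoryTheory.ObjectProperty.FullSubcategory (fun M : UMod.{u, u} R => IsFG R M.carrier)

/-- The category of finitely generated injective unitary left `R`-modules. -/
abbrev InjFGMod := CategoryTheory.ObjectProperty.FullSubcategory
  (fun M : UMod.{u, u} R => IsFG R M.carrier ∧ CategoryTheory.Injective M)

/-- The category of finitely generated projective unitary left `R`-modules. -/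
abbrev ProjFGMod := CategoryTheory.ObjectProperty.FullSubcategory
  (fun M : UMod.{u, u} R => IsFG R M.carrier ∧ CategoryTheory.Projective M)

/-- There is a duality (an additive contravariant equivalence) between the
categories of finitely generated unitary left `R`-modules and finitely
generated unitary right `S`-modules. -/
def ExistsFGDuality (R S : Type u) [NonUnitalRing R] [NonUnitalRing S] : Prop :=
  ∃ F : (FGMod R)ᵒᵖ ⥤ FGMod Sᵐᵒᵖ, F.Additive ∧ F.IsEquivalence

/-- Bundled ring with local units. -/
structure RingLU : Type (u + 1) where
  carrier : Type u
  [ring : NonUnitalRing carrier]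
  [lu : HasLocalUnits carrier]

attribute [instance] RingLU.ring RingLU.lu

/-- A ring with local units is left Morita if there is a ring `R'` with local
units and a duality from finitely generated unitary left `R`-modules to
finitely generated unitary right `R'`-modules. -/
def IsLeftMorita : Prop :=
  ∃ R' : RingLU.{u}, ExistsFGDuality R R'.carrier

/-- `R` is left locally finite: every finitely generated unitary left
`R`-module has finite length (equivalently, the lengths of chains of
submodules of such a module are bounded). -/
def IsLeftLocallyFinite : Prop :=
  ∀ (M : Type u) [AddCommGroup M] [LMod R M], IsUnitary R M → IsFG R M →
    ∃ n : ℕ, ∀ c : Fin (n + 1) → AddSubgroup M,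
      (∀ i (r : R) x, x ∈ c i → r • x ∈ c i) →
      ¬(∀ i : Fin n, c i.castSucc < c i.succ)

/-- `R` is left locally noetherian: every finitely generated unitary left
`R`-module is noetherian. -/
def IsLeftLocallyNoetherian : Prop :=
  ∀ (M : Type u) [AddCommGroup M] [LMod R M], IsUnitary R M → IsFG R M →
    ∀ c : ℕ → AddSubgroup M, (∀ i (r : R) x, x ∈ c i → r • x ∈ c i) →
      (∀ i, c i ≤ c (i + 1)) → ∃ n, ∀ m, n ≤ m → c m = c n

end cats

section principal

variable (R : Type u) [NonUnitalRing R]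

/-- The principal left ideal `Re` of a non-unital ring, for an element `e`. -/
def principalLeft (e : R) : AddSubgroup R where
  carrier := {y : R | ∃ r : R, y = r * e}
  add_mem' := by
    rintro a b ⟨r, hr⟩ ⟨s, hs⟩
    exact ⟨r + s, by rw [hr, hs, add_mul]⟩
  zero_mem' := ⟨0, by rw [zero_mul]⟩
  neg_mem' := by
    rintro a ⟨r, hr⟩
    exact ⟨-r, by rw [hr, neg_mul]⟩

instance (e : R) : LMod R ↥(principalLeft R e) where
  smul r y := ⟨r * y.1, by obtain ⟨s, hs⟩ := y.2; exact ⟨r * s, by rw [hs, mul_assoc]⟩⟩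
  smul_add' r m n := Subtype.ext (mul_add r m.1 n.1)
  add_smul' r s m := Subtype.ext (add_mul r s m.1)
  mul_smul' r s m := Subtype.ext (mul_assoc r s m.1)

/-- The principal right ideal `fS` of a non-unital ring, as a right module
(left module over the opposite ring). -/
def principalRight (f : R) : AddSubgroup R where
  carrier := {y : R | ∃ s : R, y = f * s}
  add_mem' := by
    rintro a b ⟨r, hr⟩ ⟨s, hs⟩
    exact ⟨r + s, by rw [hr, hs, mul_add]⟩
  zero_mem' := ⟨0, by rw [mul_zero]⟩
  neg_mem' := by
    rintro a ⟨r, hr⟩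
    exact ⟨-r, by rw [hr, mul_neg]⟩

instance (f : R) : LMod Rᵐᵒᵖ ↥(principalRight R f) where
  smul s y := ⟨y.1 * s.unop, by
    obtain ⟨t, ht⟩ := y.2; exact ⟨t * s.unop, by rw [ht, mul_assoc]⟩⟩
  smul_add' s m n := Subtype.ext (add_mul m.1 n.1 s.unop)
  add_smul' s t m := Subtype.ext (mul_add m.1 s.unop t.unop)
  mul_smul' s t m := Subtype.ext (mul_assoc m.1 t.unop s.unop).symm

end principal

section restr

variable (R S : Type u) [NonUnitalRing R] [NonUnitalRing S] [HasLocalUnits R] [HasLocalUnits S]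
variable (U : Type u) [AddCommGroup U] [LMod R U] [LMod Sᵐᵒᵖ U] [SMulCommClass R Sᵐᵒᵖ U]
  [SMulCommClass Sᵐᵒᵖ R U]

/-- The restriction of the contravariant functor `Hom_R(−,U)S` to finitely
generated modules, given that it preserves finite generation. -/
def dualLRestr (hFG : ∀ X : UMod.{u, u} R, IsFG R X.carrier →
    IsFG Sᵐᵒᵖ ((dualL R S U).obj (Opposite.op X)).carrier) :
    (FGMod R)ᵒᵖ ⥤ FGMod Sᵐᵒᵖ :=
  CategoryTheory.ObjectProperty.lift _
    ((CategoryTheory.ObjectProperty.ι _).op ⋙ dualL R S U)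
    (fun X => hFG X.unop.obj X.unop.property)

/-- The restriction of the contravariant functor `RHom_S(−,U)` to finitely
generated modules, given that it preserves finite generation. -/
def dualRRestr (hFG : ∀ Y : UMod.{u, u} Sᵐᵒᵖ, IsFG Sᵐᵒᵖ Y.carrier →
    IsFG R ((dualR R S U).obj (Opposite.op Y)).carrier) :
    (FGMod Sᵐᵒᵖ)ᵒᵖ ⥤ FGMod R :=
  CategoryTheory.ObjectProperty.lift _
    ((CategoryTheory.ObjectProperty.ι _).op ⋙ dualR R S U)
    (fun Y => hFG Y.unop.obj Y.unop.property)

end restr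
/-! ### Direct sums of modules over non-unital rings -/

section dfinsupp

variable {R : Type u} [NonUnitalRing R] {ι : Type v} {β : ι → Type w}
  [∀ i, AddCommGroup (β i)] [∀ i, LMod R (β i)]

/-- Pointwise scalar action on a direct sum. -/
def dfinsuppSMul (r : R) (f : Π₀ i, β i) : Π₀ i, β i :=
  f.mapRange (fun _ x => r • x) (fun _ => LMod.smul_zero' r)

theorem dfinsuppSMul_apply (r : R) (f : Π₀ i, β i) (i : ι) :
    dfinsuppSMul r f i = r • f i := DFinsupp.mapRange_apply _ _ f i

instance DFinsupp.instLMod : LMod R (Π₀ i, β i) where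
  smul := dfinsuppSMul
  smul_add' r f g := by
    ext i
    show dfinsuppSMul r (f + g) i = (dfinsuppSMul r f + dfinsuppSMul r g) i
    rw [DFinsupp.add_apply, dfinsuppSMul_apply, dfinsuppSMul_apply, dfinsuppSMul_apply,
      DFinsupp.add_apply]
    exact LMod.smul_add' r (f i) (g i)
  add_smul' r s f := by
    ext i
    show dfinsuppSMul (r + s) f i = (dfinsuppSMul r f + dfinsuppSMul s f) i
    rw [DFinsupp.add_apply, dfinsuppSMul_apply, dfinsuppSMul_apply, dfinsuppSMul_apply]
    exact LMod.add_smul' r s (f i)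
  mul_smul' r s f := by
    ext i
    show dfinsuppSMul (r * s) f i = dfinsuppSMul r (dfinsuppSMul s f) i
    rw [dfinsuppSMul_apply, dfinsuppSMul_apply, dfinsuppSMul_apply]
    exact LMod.mul_smul' r s (f i)

@[simp] theorem DFinsupp.lmod_smul_apply (r : R) (f : Π₀ i, β i) (i : ι) :
    (r • f) i = r • f i := dfinsuppSMul_apply r f i

end dfinsupp
/-! ### Miscellaneous helpers: submodule stability, `Pf`, traces, sums -/

section extra

variable {R : Type u} [NonUnitalRing R] {M : Type v} [AddCommGroup M] [LMod R M]

theorem closure_smul_stable {s : Set M}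
    (h : ∀ (r : R) (x : M), x ∈ s → r • x ∈ AddSubgroup.closure s) (r : R) {x : M}
    (hx : x ∈ AddSubgroup.closure s) : r • x ∈ AddSubgroup.closure s := by
  induction hx using AddSubgroup.closure_induction with
  | mem y hy => exact h r y hy
  | zero => rw [LMod.smul_zero']; exact AddSubgroup.zero_mem _
  | add y z hy hz ihy ihz => rw [LMod.smul_add']; exact AddSubgroup.add_mem _ ihy ihz
  | neg y hy ihy => rw [LMod.smul_neg']; exact AddSubgroup.neg_mem _ ihy

end extra

section pe

variable (R S : Type u) [NonUnitalRing R] [NonUnitalRing S]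
variable (P : Type u) [AddCommGroup P] [LMod R P] [LMod Sᵐᵒᵖ P] [SMulCommClass R Sᵐᵒᵖ P]

/-- The submodule `Pf = {x·f | x ∈ P}` of `P`, for `f ∈ S`. -/
def peSub (f : S) : AddSubgroup P where
  carrier := Set.range (fun x : P => (op f : Sᵐᵒᵖ) • x)
  add_mem' := by
    rintro a b ⟨x, rfl⟩ ⟨y, rfl⟩
    exact ⟨x + y, LMod.smul_add' (op f) x y⟩
  zero_mem' := ⟨0, LMod.smul_zero' _⟩
  neg_mem' := by
    rintro a ⟨x, rfl⟩
    exact ⟨-x, LMod.smul_neg' (op f) x⟩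

instance (f : S) : LMod R ↥(peSub S P f) where
  smul r y := ⟨r • y.1, by
    obtain ⟨x, hx⟩ := y.2
    exact ⟨r • x, by rw [← hx, smul_comm]⟩⟩
  smul_add' r m n := Subtype.ext (LMod.smul_add' r m.1 n.1)
  add_smul' r s m := Subtype.ext (LMod.add_smul' r s m.1)
  mul_smul' r s m := Subtype.ext (LMod.mul_smul' r s m.1)

variable {R S P} in
theorem sTrSub_smul_stable {M : Type u} [AddCommGroup M] [LMod R M] (r : R) {m : M}
    (hm : m ∈ sTrSub R S P M) : r • m ∈ sTrSub R S P M := by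
  refine closure_smul_stable (fun r' x hx => ?_) r hm
  obtain ⟨g, hg, y, rfl⟩ := hx
  exact AddSubgroup.subset_closure ⟨g, hg, r' • y, (g.2.map_smul r' y).symm⟩

instance (M : Type u) [AddCommGroup M] [LMod R M] : LMod R ↥(sTrSub R S P M) where
  smul r y := ⟨r • y.1, sTrSub_smul_stable r y.2⟩
  smul_add' r m n := Subtype.ext (LMod.smul_add' r m.1 n.1)
  add_smul' r s m := Subtype.ext (LMod.add_smul' r s m.1)
  mul_smul' r s m := Subtype.ext (LMod.mul_smul' r s m.1)

end pe

section sum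

/-- Summation over a direct sum against a family of additive maps
(the canonical map `⊕_I M_i → N`). -/
noncomputable def dfinsuppSum {ι : Type u} {β : ι → Type v} [∀ i, AddCommGroup (β i)]
    {γ : Type w} [AddCommGroup γ] (f : ∀ i, β i →+ γ) (x : Π₀ i, β i) : γ :=
  letI := Classical.decEq ι
  DFinsupp.sumAddHom f x

end sum


/-! ### Auxiliary lemmas for Statement 12 -/

section aux12a

variable {R : Type u} [NonUnitalRing R]

theorem IsLHom.map_sub' {M : Type v} {N : Type w} [AddCommGroup M] [AddCommGroup N]
    [LMod R M] [LMod R N] {f : M → N} (hf : IsLHom R f) (x y : M) :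
    f (x - y) = f x - f y := by
  rw [sub_eq_add_neg, hf.map_add, hf.map_neg, sub_eq_add_neg]

theorem LinMap.map_sum' {M : Type v} {N : Type w} [AddCommGroup M] [AddCommGroup N]
    [LMod R M] [LMod R N] (f : LinMap R M N) {α : Type*} (s : Finset α) (g : α → M) :
    f.1 (∑ i ∈ s, g i) = ∑ i ∈ s, f.1 (g i) :=
  map_sum (AddMonoidHom.mk' f.1 f.2.map_add) g s

theorem LinMap.sum_apply' {M : Type v} {N : Type w} [AddCommGroup M] [AddCommGroup N]
    [LMod R M] [LMod R N] {α : Type*} (s : Finset α) (F : α → LinMap R M N) (x : M) :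
    (∑ i ∈ s, F i).1 x = ∑ i ∈ s, (F i).1 x :=
  map_sum (AddMonoidHom.mk' (fun f : LinMap R M N => f.1 x) (fun _ _ => rfl)) F s

theorem LMod.smul_sum {M : Type v} [AddCommGroup M] [LMod R M] (r : R)
    {α : Type*} (s : Finset α) (g : α → M) :
    r • ∑ i ∈ s, g i = ∑ i ∈ s, r • g i :=
  map_sum (AddMonoidHom.mk' (fun m : M => r • m) (LMod.smul_add' r)) g s

theorem lspan_le' {M : Type v} [AddCommGroup M] [LMod R M] {X : Set M} {H : AddSubgroup M}
    (hX : X ⊆ H) (hsmul : ∀ (r : R) (x : M), x ∈ H → r • x ∈ H) :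
    ∀ a ∈ lspan R X, a ∈ H := by
  intro a ha
  refine (AddSubgroup.closure_le H).mpr ?_ ha
  rintro m (hm | ⟨r, x, hx, rfl⟩)
  · exact hX hm
  · exact hsmul r x (hX hx)

theorem exists_idem_smul_closure [HasLocalUnits R] {W : Type v} [AddCommGroup W] [LMod R W]
    {X : Set W} (hX : ∀ x ∈ X, ∃ e : R, e * e = e ∧ e • x = x) :
    ∀ m ∈ AddSubgroup.closure X, ∃ e : R, e * e = e ∧ e • m = m := by
  intro m hm
  induction hm using AddSubgroup.closure_induction with
  | mem x hx => exact hX x hx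
  | zero =>
    obtain ⟨e, he, -⟩ := HasLocalUnits.exists_unit (∅ : Finset R)
    exact ⟨e, he, LMod.smul_zero' e⟩
  | add x y hx hy ihx ihy =>
    classical
    obtain ⟨e₁, he₁, hz₁⟩ := ihx
    obtain ⟨e₂, he₂, hz₂⟩ := ihy
    obtain ⟨e, he, h⟩ := HasLocalUnits.exists_unit {e₁, e₂}
    refine ⟨e, he, ?_⟩
    have h1 : e • x = x := by
      rw [← hz₁, ← LMod.mul_smul', (h e₁ (Finset.mem_insert_self _ _)).1]
    have h2 : e • y = y := by
      rw [← hz₂, ← LMod.mul_smul',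
        (h e₂ (Finset.mem_insert_of_mem (Finset.mem_singleton_self _))).1]
    rw [LMod.smul_add', h1, h2]
  | neg x hx ihx =>
    obtain ⟨e, he, hz⟩ := ihx
    exact ⟨e, he, by rw [LMod.smul_neg', hz]⟩

theorem exists_idem_smul [HasLocalUnits R] {W : Type v} [AddCommGroup W] [LMod R W]
    (hW : IsUnitary R W) (z : W) : ∃ e : R, e * e = e ∧ e • z = z := by
  refine exists_idem_smul_closure ?_ z (hW z)
  rintro x ⟨r, n, rfl⟩
  obtain ⟨e, he, h⟩ := HasLocalUnits.exists_unit {r}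
  exact ⟨e, he, by rw [← LMod.mul_smul', (h r (Finset.mem_singleton_self r)).1]⟩

theorem UMod.epi_of_surjective {A B : UMod.{u, v} R}
    (f : A ⟶ B) (hf : Function.Surjective f.1) : Epi f := by
  constructor
  intro Z g h H
  apply LinMap.ext
  funext b
  obtain ⟨a, rfl⟩ := hf b
  exact congrFun (congrArg Subtype.val H) a

theorem UMod.mono_of_injective {A B : UMod.{u, v} R}
    (f : A ⟶ B) (hf : Function.Injective f.1) : Mono f := by
  constructor
  intro Z g h H
  apply LinMap.ext
  funext a
  exact hf (congrFun (congrArg Subtype.val H) a)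

/-- The map `p ↦ (p)v • m` for a functional `v : P → R` and an element `m`. -/
def scalMap {P W : Type u} [AddCommGroup P] [AddCommGroup W]
    [LMod R P] [LMod R W] (v : LinMap R P R) (m : W) : LinMap R P W :=
  ⟨fun p => v.1 p • m,
   ⟨fun x y => by rw [v.2.map_add, LMod.add_smul'],
    fun r x => by rw [v.2.map_smul, NonUnitalRing.smul_def, LMod.mul_smul']⟩⟩

@[simp] theorem scalMap_apply {P W : Type u} [AddCommGroup P] [AddCommGroup W]
    [LMod R P] [LMod R W] (v : LinMap R P R) (m : W) (p : P) :
    (scalMap v m).1 p = v.1 p • m := rfl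

end aux12a


section aux12b

variable {R : Type u} [NonUnitalRing R] {P : Type u} [AddCommGroup P] [LMod R P]
variable {ι : Type u} {rel : ι → ι → Prop}

theorem split_indep
    (htrans : ∀ {i j k}, rel i j → rel j k → rel i k)
    (hdir : ∀ i j, ∃ k, rel i k ∧ rel j k)
    (D : SplitSystem.{u, u} R ι rel) (c : LimitCocone R D P) (K : ι)
    (j j' k k' : ι) (y : (D.obj j).carrier) (y' : (D.obj j').carrier)
    (hjy : (c.incl j).1 y = (c.incl j').1 y')
    (hKk : rel K k) (hjk : rel j k) (hKk' : rel K k') (hj'k' : rel j' k') :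
    (D.split hKk).1 ((D.map hjk).1 y) = (D.split hKk').1 ((D.map hj'k').1 y') := by
  obtain ⟨l, hkl, hk'l⟩ := hdir k k'
  set u := (D.map (htrans hjk hkl)).1 y - (D.map (htrans hj'k' hk'l)).1 y' with hu
  have h0 : (c.incl l).1 u = 0 := by
    rw [hu, (c.incl l).2.map_sub', c.compat (htrans hjk hkl) y,
      c.compat (htrans hj'k' hk'l) y', hjy, sub_self]
  obtain ⟨l', hll', hmap0⟩ := c.eventually_zero l u h0
  rw [hu, (D.map hll').2.map_sub', sub_eq_zero,
    D.map_map (htrans hjk hkl) hll' (htrans hjk (htrans hkl hll')) y,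
    D.map_map (htrans hj'k' hk'l) hll' (htrans hj'k' (htrans hk'l hll')) y'] at hmap0
  have hkl' : rel k l' := htrans hkl hll'
  have hk'l'2 : rel k' l' := htrans hk'l hll'
  have e3 : (D.split hkl').1 ((D.map (htrans hjk hkl')).1 y) = (D.map hjk).1 y := by
    rw [← D.map_map hjk hkl' (htrans hjk hkl') y]
    exact D.split_map hkl' _
  have e4 : (D.split hk'l'2).1 ((D.map (htrans hj'k' hk'l'2)).1 y') = (D.map hj'k').1 y' := by
    rw [← D.map_map hj'k' hk'l'2 (htrans hj'k' hk'l'2) y']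
    exact D.split_map hk'l'2 _
  rw [← e3, ← e4,
    D.split_split hKk hkl' (htrans hKk hkl') _,
    D.split_split hKk' hk'l'2 (htrans hKk' hk'l'2) _]
  exact congrArg (D.split (htrans hKk hkl')).1 hmap0

theorem exists_retraction
    (htrans : ∀ {i j k}, rel i j → rel j k → rel i k)
    (hdir : ∀ i j, ∃ k, rel i k ∧ rel j k)
    (D : SplitSystem.{u, u} R ι rel) (c : LimitCocone R D P) (K : ι) :
    ∃ π : LinMap R P (D.obj K).carrier, ∀ y, π.1 ((c.incl K).1 y) = y := by
  classical
  choose idx w hw using c.exhaustive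
  choose k hKk hjk using fun x => hdir K (idx x)
  set F : P → (D.obj K).carrier :=
    fun x => (D.split (hKk x)).1 ((D.map (hjk x)).1 (w x)) with hF
  have Fspec : ∀ (x : P) {j' k'} (y' : (D.obj j').carrier)
      (h1 : (c.incl j').1 y' = x) (hKk' : rel K k') (hj'k' : rel j' k'),
      (D.split hKk').1 ((D.map hj'k').1 y') = F x := by
    intro x j' k' y' h1 hKk' hj'k'
    exact @split_indep R _ P _ _ ι rel (fun {i j k} => htrans) hdir D c K j' (idx x) k' (k x)
      y' (w x) (by rw [h1, hw x]) hKk' hj'k' (hKk x) (hjk x)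
  have Fadd : ∀ a b : P, F (a + b) = F a + F b := by
    intro a b
    obtain ⟨k0, h1, h2⟩ := hdir (idx a) (idx b)
    obtain ⟨k1, hK1, h01⟩ := hdir K k0
    have hrep : (c.incl k0).1 ((D.map h1).1 (w a) + (D.map h2).1 (w b)) = a + b := by
      rw [(c.incl k0).2.map_add, c.compat h1 (w a), c.compat h2 (w b), hw a, hw b]
    rw [← Fspec (a + b) _ hrep hK1 h01, (D.map h01).2.map_add, (D.split hK1).2.map_add]
    congr 1
    · rw [D.map_map h1 h01 (htrans h1 h01) (w a)]
      exact Fspec a _ (hw a) hK1 (htrans h1 h01)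
    · rw [D.map_map h2 h01 (htrans h2 h01) (w b)]
      exact Fspec b _ (hw b) hK1 (htrans h2 h01)
  have Fsmul : ∀ (r : R) (a : P), F (r • a) = r • F a := by
    intro r a
    have hrep : (c.incl (idx a)).1 (r • w a) = r • a := by
      rw [(c.incl (idx a)).2.map_smul, hw a]
    rw [← Fspec (r • a) _ hrep (hKk a) (hjk a), (D.map (hjk a)).2.map_smul,
      (D.split (hKk a)).2.map_smul]
  refine ⟨⟨F, ⟨Fadd, Fsmul⟩⟩, fun y0 => ?_⟩
  obtain ⟨k0, hK0, hK0'⟩ := hdir K K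
  have := Fspec ((c.incl K).1 y0) y0 rfl hK0 hK0'
  show F ((c.incl K).1 y0) = y0
  rw [← this]
  exact D.split_map hK0 y0

end aux12b


section aux12c

theorem exists_dual_basis
    {R : Type u} [NonUnitalRing R] [HasLocalUnits R]
    {P : Type u} [AddCommGroup P] [LMod R P]
    (hlp : IsLocallyProjective R P)
    (w : LinMap R P P) (hfgw : IsFGSet R (Set.range w.1)) :
    ∃ (nb : ℕ) (b : Fin nb → P) (v : Fin nb → LinMap R P R),
      ∀ x : P, w.1 x = ∑ t, (v t).1 (w.1 x) • b t := by
  classical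
  obtain ⟨ι, rel, hrefl, htrans, hne, hdir, D, c, hproj⟩ := hlp
  obtain ⟨G, hG1, hG2⟩ := hfgw
  -- a common index K whose image contains all generators
  have hfinset : ∀ G0 : Finset P, ∃ K : ι, ∀ g ∈ G0, g ∈ Set.range (c.incl K).1 := by
    intro G0
    induction G0 using Finset.induction with
    | empty =>
      obtain ⟨i0⟩ := hne
      exact ⟨i0, by simp⟩
    | @insert a G' ha ih =>
      obtain ⟨K0, hK0⟩ := ih
      obtain ⟨i1, y1, hy1⟩ := c.exhaustive a
      obtain ⟨K1, hA, hB⟩ := hdir i1 K0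
      refine ⟨K1, fun g hg => ?_⟩
      rcases Finset.mem_insert.mp hg with rfl | hg
      · exact ⟨(D.map hA).1 y1, by rw [c.compat hA y1, hy1]⟩
      · obtain ⟨y0, hy0⟩ := hK0 g hg
        exact ⟨(D.map hB).1 y0, by rw [c.compat hB y0, hy0]⟩
  obtain ⟨K, hK⟩ := hfinset G
  -- the range of `incl K` as a subgroup
  set RK : AddSubgroup P := (AddMonoidHom.mk' (c.incl K).1 (c.incl K).2.map_add).range
    with hRK
  have hmemRK : ∀ p : P, p ∈ RK ↔ ∃ y, (c.incl K).1 y = p := fun p => Iff.rfl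
  have hrange : ∀ p : P, w.1 p ∈ RK := by
    intro p
    refine lspan_le' (R := R) (fun g hg => ?_) (fun r x hx => ?_) (w.1 p) (hG2 _ ⟨p, rfl⟩)
    · exact hK g hg
    · obtain ⟨y, hy⟩ := hx
      refine ⟨r • y, ?_⟩
      show (c.incl K).1 (r • y) = r • x
      rw [(c.incl K).2.map_smul, show (c.incl K).1 y = x from hy]
  obtain ⟨π, hπ⟩ :=
    @exists_retraction R _ P _ _ ι rel (fun {i j k} => htrans) hdir D c K
  -- finite generators of `P_K`
  obtain ⟨sz, hsz⟩ := (hproj K).1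
  set L := sz.toList with hL
  set nb := L.length with hnb
  set z : Fin nb → (D.obj K).carrier := fun t => L.get t with hz
  choose e he1 he2 using fun t => exists_idem_smul (D.obj K).unitary (z t)
  -- the free-ish cover `Q = ⊕ Re_t`
  set Q := Π₀ t : Fin nb, ↥(principalLeft R (e t)) with hQ
  have het : ∀ t, e t ∈ principalLeft R (e t) := fun t => ⟨e t, (he1 t).symm⟩
  set qmap : LinMap R Q (D.obj K).carrier :=
    ⟨fun a => ∑ t, ((a t : ↥(principalLeft R (e t))) : R) • z t,
     ⟨fun a b => by
        rw [← Finset.sum_add_distrib]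
        refine Finset.sum_congr rfl fun t _ => ?_
        have h1 : (((a + b) t : ↥(principalLeft R (e t))) : R)
            = ((a t : ↥(principalLeft R (e t))) : R) + ((b t : ↥(principalLeft R (e t))) : R) := by
          rw [DFinsupp.add_apply]; rfl
        rw [h1, LMod.add_smul'],
      fun r a => by
        rw [LMod.smul_sum]
        refine Finset.sum_congr rfl fun t _ => ?_
        have h1 : (((r • a) t : ↥(principalLeft R (e t))) : R)
            = r * ((a t : ↥(principalLeft R (e t))) : R) := by
          rw [DFinsupp.lmod_smul_apply]; rfl
        rw [h1]
        exact LMod.mul_smul' r _ (z t)⟩⟩ with hqmap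
  have Qunit : IsUnitary R Q := by
    intro a
    induction a using DFinsupp.induction with
    | h0 => exact AddSubgroup.zero_mem _
    | ha t bt f hft hbt ih =>
      refine AddSubgroup.add_mem _ ?_ ih
      obtain ⟨ρ, hρ⟩ := bt.2
      have h1 : DFinsupp.single t bt
          = ρ • (DFinsupp.single t (⟨e t, het t⟩ : ↥(principalLeft R (e t))) : Q) := by
        ext t'
        rw [DFinsupp.lmod_smul_apply]
        by_cases h : t' = t
        · subst h
          rw [DFinsupp.single_eq_same, DFinsupp.single_eq_same]
          exact hρ
        · rw [DFinsupp.single_eq_of_ne h, DFinsupp.single_eq_of_ne h,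
            LMod.smul_zero']
      rw [h1]
      exact AddSubgroup.subset_closure ⟨ρ, _, rfl⟩
  set Qobj : UMod.{u, u} R := { carrier := Q, unitary := Qunit } with hQobj
  have hqsurj : Function.Surjective qmap.1 := by
    intro u
    have hu := hsz u
    have hmem : u ∈ (AddMonoidHom.mk' qmap.1 qmap.2.map_add).range := by
      refine lspan_le' (R := R) (fun x hx => ?_) (fun r x hx => ?_) u hu
      · have hxl : x ∈ L := Finset.mem_toList.mpr hx
        obtain ⟨t, ht⟩ := List.mem_iff_get.mp hxl
        refine ⟨(DFinsupp.single t (⟨e t, het t⟩ : ↥(principalLeft R (e t))) : Q), ?_⟩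
        show ∑ t', (((DFinsupp.single t (⟨e t, het t⟩ : ↥(principalLeft R (e t))) : Q) t'
            : ↥(principalLeft R (e t'))) : R) • z t' = x
        rw [Finset.sum_eq_single t]
        · rw [DFinsupp.single_eq_same]
          show (e t) • z t = x
          rw [he2 t]
          exact ht
        · intro t' _ hne'
          rw [DFinsupp.single_eq_of_ne hne']
          exact LMod.zero_smul' (z t')
        · intro habs
          exact absurd (Finset.mem_univ t) habs
      · obtain ⟨a, ha⟩ := hx
        refine ⟨r • a, ?_⟩
        show qmap.1 (r • a) = r • x
        rw [qmap.2.map_smul, show qmap.1 a = x from ha]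
    exact hmem
  have hepi : Epi (show Qobj ⟶ D.obj K from qmap) := UMod.epi_of_surjective _ hqsurj
  haveI := hepi
  haveI : Projective (D.obj K) := (hproj K).2
  obtain ⟨σ, hσ⟩ := Projective.factors (𝟙 (D.obj K)) (show Qobj ⟶ D.obj K from qmap)
  have hσ' : ∀ u, qmap.1 (σ.1 u) = u := fun u => congrFun (congrArg Subtype.val hσ) u
  -- coordinates and dual basis
  refine ⟨nb, fun t => (c.incl K).1 (z t),
    fun t => ⟨fun x => ((σ.1 (π.1 x) t : ↥(principalLeft R (e t))) : R),
      ⟨fun x y => by rw [π.2.map_add, σ.2.map_add, DFinsupp.add_apply]; rfl,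
       fun r x => by rw [π.2.map_smul, σ.2.map_smul, DFinsupp.lmod_smul_apply]; rfl⟩⟩,
    fun x => ?_⟩
  obtain ⟨u0, hu0⟩ := hrange x
  have hu0' : (c.incl K).1 u0 = w.1 x := hu0
  have hπ0 : π.1 (w.1 x) = u0 := by rw [← hu0']; exact hπ u0
  calc w.1 x = (c.incl K).1 (qmap.1 (σ.1 u0)) := by rw [hσ' u0, hu0']
    _ = ∑ t, (((σ.1 u0 t : ↥(principalLeft R (e t))) : R)) • (c.incl K).1 (z t) := by
        show (c.incl K).1 (∑ t, ((σ.1 u0 t : ↥(principalLeft R (e t))) : R) • z t) = _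
        rw [LinMap.map_sum']
        exact Finset.sum_congr rfl fun t _ => (c.incl K).2.map_smul _ _
    _ = ∑ t, ((σ.1 (π.1 (w.1 x)) t : ↥(principalLeft R (e t))) : R) • (c.incl K).1 (z t) := by
        rw [hπ0]

end aux12c

/-! ## STATEMENT 12
For `M` unitary and `N` injective with `st_P(N) = 0`, the map
`Hom_R(M,N) → Hom_S(SHom_R(P,M), SHom_R(P,N))`, `g ↦ SHom_R(P,g)`, is an
isomorphism of abelian groups. -/
theorem sHom_hom_bijective
    (R : Type u) [NonUnitalRing R] [HasLocalUnits R]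
    (P : Type u) [AddCommGroup P] [LMod R P]
    (hPu : IsUnitary R P)
    (hlp : IsLocallyProjective R P)
    (S : NonUnitalSubring (LinMap R P P)) [HasLocalUnits ↥S]
    [LMod (↥S)ᵐᵒᵖ P] [SMulCommClass R (↥S)ᵐᵒᵖ P]
    (hact : ∀ (s : ↥S) (x : P), (MulOpposite.op s) • x = (s : LinMap R P P).1 x)
    (hPS : IsUnitary (↥S)ᵐᵒᵖ P)
    (hSEnd : ((AddSubgroup.closure
        {h : LinMap R P P | ∃ s ∈ S, ∃ g : LinMap R P P, h = s * g} :
        AddSubgroup (LinMap R P P)) : Set (LinMap R P P)) = ↑S)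
    (hfg : ∀ f : LinMap R P P, f ∈ S → f * f = f → IsFGSet R (Set.range f.1))
    (M : UMod.{u, u} R)
    (N : UMod.{u, u} R) (hinj : CategoryTheory.Injective N)
    (hst : stPZero R ↥S P N.carrier) :
    (∀ g h : LinMap R M.carrier N.carrier,
      sHomLin (S := ↥S) (P := P) (g + h) =
        sHomLin (S := ↥S) (P := P) g + sHomLin (S := ↥S) (P := P) h) ∧
    Function.Bijective
      (fun g : LinMap R M.carrier N.carrier => sHomLin (S := ↥S) (P := P) g) := by
  classical
  have memS : ∀ (s g : LinMap R P P), s ∈ S → s * g ∈ S := by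
    intro s g hs
    have h1 : s * g ∈ ((AddSubgroup.closure
        {h : LinMap R P P | ∃ s ∈ S, ∃ g : LinMap R P P, h = s * g} :
        AddSubgroup (LinMap R P P)) : Set (LinMap R P P)) :=
      AddSubgroup.subset_closure ⟨s, hs, g, rfl⟩
    rw [hSEnd] at h1
    exact h1
  have dualbasis : ∀ w : LinMap R P P, w ∈ S → w * w = w →
      ∃ (nb : ℕ) (b : Fin nb → P) (v : Fin nb → LinMap R P R),
        ∀ x : P, w.1 x = ∑ t, (v t).1 (w.1 x) • b t :=
    fun w hwS hwid => exists_dual_basis hlp w (hfg w hwS hwid)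
  have hadd : ∀ g h : LinMap R M.carrier N.carrier,
      sHomLin (S := ↥S) (P := P) (g + h)
        = sHomLin (S := ↥S) (P := P) g + sHomLin (S := ↥S) (P := P) h := by
    intro g h
    apply LinMap.ext; funext α; apply Subtype.ext; apply LinMap.ext; funext x
    rfl
  -- kernel of the map is zero
  have hker : ∀ g : LinMap R M.carrier N.carrier,
      sHomLin (S := ↥S) (P := P) g = 0 → g = 0 := by
    intro g hg0
    have hg0' : ∀ (f : LinMap R P M.carrier) (hf : f ∈ umax ↥S (LinMap R P M.carrier)) (x : P),
        g.1 (f.1 x) = 0 := by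
      intro f hf x
      have h1 : (sHomLin (S := ↥S) (P := P) g).1 ⟨f, hf⟩ = 0 := by rw [hg0]; rfl
      exact congrArg (fun z : SHom R ↥S P N.carrier => (z : LinMap R P N.carrier).1 x) h1
    apply LinMap.ext; funext m0
    show g.1 m0 = (0 : LinMap R M.carrier N.carrier).1 m0
    show g.1 m0 = 0
    refine hst ((AddMonoidHom.mk' g.1 g.2.map_add).range) ?_ ?_ (g.1 m0) ⟨m0, rfl⟩
    · rintro r x ⟨a, ha⟩
      refine ⟨r • a, ?_⟩
      show g.1 (r • a) = r • x
      rw [g.2.map_smul, show g.1 a = x from ha]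
    · intro s f hfK
      obtain ⟨w', hw'i, hw's⟩ := HasLocalUnits.exists_unit ({s} : Finset ↥S)
      have h1 : w' * s = s := (hw's s (Finset.mem_singleton_self s)).1
      have hw'val : (w' : LinMap R P P) * (w' : LinMap R P P) = (w' : LinMap R P P) :=
        congrArg Subtype.val hw'i
      obtain ⟨nb, b, v, hdb⟩ := dualbasis (w' : LinMap R P P) w'.2 hw'val
      choose mt hmt using fun t : Fin nb =>
        (show f.1 ((s : LinMap R P P).1 (b t)) ∈ (AddMonoidHom.mk' g.1 g.2.map_add).range
          from hfK _)
      have hmt' : ∀ t, g.1 (mt t) = f.1 ((s : LinMap R P P).1 (b t)) := fun t => hmt t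
      set β : LinMap R P M.carrier := ∑ t, (w' • scalMap (v t) (mt t)) with hβ
      have hβmem : β ∈ umax ↥S (LinMap R P M.carrier) := by
        rw [hβ]
        exact AddSubgroup.sum_mem _ fun t _ => smul_mem_umax w' (scalMap (v t) (mt t))
      have hβx : ∀ x, β.1 x = ∑ t, (v t).1 ((w' : LinMap R P P).1 x) • mt t := by
        intro x
        rw [hβ, LinMap.sum_apply']
        refine Finset.sum_congr rfl fun t _ => ?_
        rw [LinMap.pre_smul_apply, hact w' x]
        rfl
      apply LinMap.ext; funext x
      show (s • f).1 x = (0 : LinMap R P N.carrier).1 x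
      show (s • f).1 x = 0
      have hws : w' • (s • f) = s • f := by rw [← LMod.mul_smul', h1]
      calc (s • f).1 x = (s • f).1 ((w' : LinMap R P P).1 x) := by
            conv_lhs => rw [← hws]
            rw [LinMap.pre_smul_apply, hact w' x]
        _ = (s • f).1 (∑ t, (v t).1 ((w' : LinMap R P P).1 x) • b t) := by rw [← hdb x]
        _ = ∑ t, (v t).1 ((w' : LinMap R P P).1 x) • (s • f).1 (b t) := by
            rw [LinMap.map_sum']
            exact Finset.sum_congr rfl fun t _ => (s • f).2.map_smul _ _
        _ = ∑ t, (v t).1 ((w' : LinMap R P P).1 x) • g.1 (mt t) := by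
            refine Finset.sum_congr rfl fun t _ => ?_
            have e1 : (s • f).1 (b t) = f.1 ((s : LinMap R P P).1 (b t)) := by
              rw [LinMap.pre_smul_apply, hact s (b t)]
            rw [e1, ← hmt' t]
        _ = ∑ t, g.1 ((v t).1 ((w' : LinMap R P P).1 x) • mt t) :=
            Finset.sum_congr rfl fun t _ => (g.2.map_smul _ _).symm
        _ = g.1 (β.1 x) := by rw [hβx x, LinMap.map_sum']
        _ = 0 := hg0' β hβmem x
  refine ⟨hadd, ⟨?_, ?_⟩⟩
  · -- injectivity
    intro g₁ g₂ h12
    have h12' : sHomLin (S := ↥S) (P := P) g₁ = sHomLin (S := ↥S) (P := P) g₂ := h12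
    have h4 := hadd (g₁ - g₂) g₂
    rw [sub_add_cancel, h12'] at h4
    have h3 : sHomLin (S := ↥S) (P := P) (g₁ - g₂) = 0 := right_eq_add.mp h4
    exact sub_eq_zero.mp (hker _ h3)
  · -- surjectivity
    intro Φ
    set genΦ : Set (M.carrier × N.carrier) :=
      {p | ∃ (f : SHom R ↥S P M.carrier) (x : P), p = (f.1.1 x, (Φ.1 f).1.1 x)} with hgen
    -- Γ-stability under the R-action
    have hGsmul : ∀ (r : R) (p : M.carrier × N.carrier), p ∈ AddSubgroup.closure genΦ →
        (r • p.1, r • p.2) ∈ AddSubgroup.closure genΦ := by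
      intro r p hp
      induction hp using AddSubgroup.closure_induction with
      | mem q hq =>
        obtain ⟨f, x, rfl⟩ := hq
        show ((r • f.1.1 x : M.carrier), (r • (Φ.1 f).1.1 x : N.carrier))
          ∈ AddSubgroup.closure genΦ
        have h1 : ((r • f.1.1 x : M.carrier), (r • (Φ.1 f).1.1 x : N.carrier))
            = (f.1.1 (r • x), (Φ.1 f).1.1 (r • x)) := by
          rw [f.1.2.map_smul, (Φ.1 f).1.2.map_smul]
        rw [h1]
        exact AddSubgroup.subset_closure ⟨f, r • x, rfl⟩
      | zero =>
        show ((r • (0 : M.carrier) : M.carrier), (r • (0 : N.carrier) : N.carrier))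
          ∈ AddSubgroup.closure genΦ
        rw [LMod.smul_zero', LMod.smul_zero']
        exact AddSubgroup.zero_mem _
      | add a b ha hb iha ihb =>
        have h2 : ((r • (a + b).1 : M.carrier), (r • (a + b).2 : N.carrier))
            = (r • a.1, r • a.2) + (r • b.1, r • b.2) := by
          show ((r • (a.1 + b.1) : M.carrier), (r • (a.2 + b.2) : N.carrier)) = _
          rw [LMod.smul_add', LMod.smul_add']
          rfl
        rw [h2]
        exact AddSubgroup.add_mem _ iha ihb
      | neg a ha iha =>
        have h2 : ((r • (-a).1 : M.carrier), (r • (-a).2 : N.carrier))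
            = -((r • a.1, r • a.2)) := by
          show ((r • (-a.1) : M.carrier), (r • (-a.2) : N.carrier)) = _
          rw [LMod.smul_neg', LMod.smul_neg']
          rfl
        rw [h2]
        exact AddSubgroup.neg_mem _ iha
    -- every element of the trace has an image
    have hGex : ∀ m ∈ sTrSub R ↥S P M.carrier, ∃ n, (m, n) ∈ AddSubgroup.closure genΦ := by
      intro m hm
      induction hm using AddSubgroup.closure_induction with
      | mem x hx =>
        obtain ⟨f0, hf0, x0, rfl⟩ := hx
        exact ⟨(Φ.1 ⟨f0, hf0⟩).1.1 x0, AddSubgroup.subset_closure ⟨⟨f0, hf0⟩, x0, rfl⟩⟩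
      | zero => exact ⟨0, AddSubgroup.zero_mem _⟩
      | add a b ha hb iha ihb =>
        obtain ⟨n1, h1⟩ := iha
        obtain ⟨n2, h2⟩ := ihb
        refine ⟨n1 + n2, ?_⟩
        have := AddSubgroup.add_mem _ h1 h2
        rwa [Prod.mk_add_mk] at this
      | neg a ha iha =>
        obtain ⟨n1, h1⟩ := iha
        refine ⟨-n1, ?_⟩
        have := AddSubgroup.neg_mem _ h1
        rwa [Prod.neg_mk] at this
    -- Claim B: Φ is compatible with the maps `x ↦ v(xw) • m`
    have claimB : ∀ (p : M.carrier × N.carrier), p ∈ AddSubgroup.closure genΦ →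
        ∀ (w : ↥S) (v : LinMap R P R),
        Φ.1 ⟨w • scalMap v p.1, smul_mem_umax w _⟩
          = (⟨w • scalMap v p.2, smul_mem_umax w _⟩ : SHom R ↥S P N.carrier) := by
      intro p hp
      induction hp using AddSubgroup.closure_induction with
      | mem q hq =>
        intro w v
        obtain ⟨f, x0, rfl⟩ := hq
        show Φ.1 ⟨w • scalMap v (f.1.1 x0), smul_mem_umax w _⟩
          = (⟨w • scalMap v ((Φ.1 f).1.1 x0), smul_mem_umax w _⟩ : SHom R ↥S P N.carrier)
        set sm : ↥S := ⟨(w : LinMap R P P) * scalMap v x0, memS _ _ w.2⟩ with hsm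
        have e1 : (⟨w • scalMap v (f.1.1 x0), smul_mem_umax w _⟩
            : SHom R ↥S P M.carrier) = sm • f := by
          apply Subtype.ext; apply LinMap.ext; funext pp
          show (w • scalMap v (f.1.1 x0)).1 pp = (sm • f.1).1 pp
          rw [LinMap.pre_smul_apply, LinMap.pre_smul_apply, hact w pp, hact sm pp]
          show v.1 ((w : LinMap R P P).1 pp) • f.1.1 x0
            = f.1.1 ((scalMap v x0).1 ((w : LinMap R P P).1 pp))
          rw [scalMap_apply, f.1.2.map_smul]
        rw [e1, Φ.2.map_smul]
        apply Subtype.ext; apply LinMap.ext; funext pp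
        show (sm • (Φ.1 f).1).1 pp = (w • scalMap v ((Φ.1 f).1.1 x0)).1 pp
        rw [LinMap.pre_smul_apply, LinMap.pre_smul_apply, hact sm pp, hact w pp]
        show (Φ.1 f).1.1 ((scalMap v x0).1 ((w : LinMap R P P).1 pp))
          = v.1 ((w : LinMap R P P).1 pp) • (Φ.1 f).1.1 x0
        rw [scalMap_apply, (Φ.1 f).1.2.map_smul]
      | zero =>
        intro w v
        have hM0 : (⟨w • scalMap v ((0 : M.carrier × N.carrier)).1, smul_mem_umax w _⟩
            : SHom R ↥S P M.carrier) = 0 := by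
          apply Subtype.ext; apply LinMap.ext; funext pp
          show (w • scalMap v (0 : M.carrier)).1 pp = 0
          rw [LinMap.pre_smul_apply]
          exact LMod.smul_zero' _
        have hN0 : (⟨w • scalMap v ((0 : M.carrier × N.carrier)).2, smul_mem_umax w _⟩
            : SHom R ↥S P N.carrier) = 0 := by
          apply Subtype.ext; apply LinMap.ext; funext pp
          show (w • scalMap v (0 : N.carrier)).1 pp = 0
          rw [LinMap.pre_smul_apply]
          exact LMod.smul_zero' _
        rw [hM0, hN0]
        exact IsLHom.map_zero Φ.2
      | add a b ha hb iha ihb =>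
        intro w v
        show Φ.1 ⟨w • scalMap v (a.1 + b.1), smul_mem_umax w _⟩
          = (⟨w • scalMap v (a.2 + b.2), smul_mem_umax w _⟩ : SHom R ↥S P N.carrier)
        have hMadd : (⟨w • scalMap v (a.1 + b.1), smul_mem_umax w _⟩
            : SHom R ↥S P M.carrier)
            = ⟨w • scalMap v a.1, smul_mem_umax w _⟩ + ⟨w • scalMap v b.1, smul_mem_umax w _⟩ := by
          apply Subtype.ext; apply LinMap.ext; funext pp
          show (w • scalMap v (a.1 + b.1)).1 pp
            = (w • scalMap v a.1).1 pp + (w • scalMap v b.1).1 pp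
          rw [LinMap.pre_smul_apply, LinMap.pre_smul_apply, LinMap.pre_smul_apply]
          exact LMod.smul_add' _ a.1 b.1
        have hNadd : (⟨w • scalMap v (a.2 + b.2), smul_mem_umax w _⟩
            : SHom R ↥S P N.carrier)
            = ⟨w • scalMap v a.2, smul_mem_umax w _⟩ + ⟨w • scalMap v b.2, smul_mem_umax w _⟩ := by
          apply Subtype.ext; apply LinMap.ext; funext pp
          show (w • scalMap v (a.2 + b.2)).1 pp
            = (w • scalMap v a.2).1 pp + (w • scalMap v b.2).1 pp
          rw [LinMap.pre_smul_apply, LinMap.pre_smul_apply, LinMap.pre_smul_apply]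
          exact LMod.smul_add' _ a.2 b.2
        rw [hMadd, Φ.2.map_add, iha w v, ihb w v, hNadd]
      | neg a ha iha =>
        intro w v
        show Φ.1 ⟨w • scalMap v (-a.1), smul_mem_umax w _⟩
          = (⟨w • scalMap v (-a.2), smul_mem_umax w _⟩ : SHom R ↥S P N.carrier)
        have hMneg : (⟨w • scalMap v (-a.1), smul_mem_umax w _⟩
            : SHom R ↥S P M.carrier) = -⟨w • scalMap v a.1, smul_mem_umax w _⟩ := by
          apply Subtype.ext; apply LinMap.ext; funext pp
          show (w • scalMap v (-a.1)).1 pp = -((w • scalMap v a.1).1 pp)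
          rw [LinMap.pre_smul_apply, LinMap.pre_smul_apply]
          exact LMod.smul_neg' _ a.1
        have hNneg : (⟨w • scalMap v (-a.2), smul_mem_umax w _⟩
            : SHom R ↥S P N.carrier) = -⟨w • scalMap v a.2, smul_mem_umax w _⟩ := by
          apply Subtype.ext; apply LinMap.ext; funext pp
          show (w • scalMap v (-a.2)).1 pp = -((w • scalMap v a.2).1 pp)
          rw [LinMap.pre_smul_apply, LinMap.pre_smul_apply]
          exact LMod.smul_neg' _ a.2
        rw [hMneg, Φ.2.map_neg, iha w v, hNneg]
    -- Claim A
    have claimA : ∀ n : N.carrier, ((0 : M.carrier), n) ∈ AddSubgroup.closure genΦ →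
        ∀ (w : ↥S) (v : LinMap R P R) (x : P),
        v.1 ((w : LinMap R P P).1 x) • n = 0 := by
      intro n hn w v x
      have hB : Φ.1 ⟨w • scalMap v (0 : M.carrier), smul_mem_umax w _⟩
          = (⟨w • scalMap v n, smul_mem_umax w _⟩ : SHom R ↥S P N.carrier) :=
        claimB ((0 : M.carrier), n) hn w v
      have hM0 : (⟨w • scalMap v (0 : M.carrier), smul_mem_umax w _⟩
          : SHom R ↥S P M.carrier) = 0 := by
        apply Subtype.ext; apply LinMap.ext; funext pp
        show (w • scalMap v (0 : M.carrier)).1 pp = 0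
        rw [LinMap.pre_smul_apply]
        exact LMod.smul_zero' _
      rw [hM0, IsLHom.map_zero Φ.2] at hB
      have h4 : (w • scalMap v n).1 x = 0 :=
        congrArg (fun z : SHom R ↥S P N.carrier => (z : LinMap R P N.carrier).1 x) hB.symm
      rw [LinMap.pre_smul_apply, hact w x] at h4
      exact h4
    -- Well-definedness via st_P(N) = 0
    have hWD : ∀ n : N.carrier, ((0 : M.carrier), n) ∈ AddSubgroup.closure genΦ → n = 0 := by
      have hstable : ∀ (r : R) (x : N.carrier),
          ((0 : M.carrier), x) ∈ AddSubgroup.closure genΦ →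
          ((0 : M.carrier), r • x) ∈ AddSubgroup.closure genΦ := by
        intro r x hx
        have h2 : ((r • (0 : M.carrier) : M.carrier), r • x) ∈ AddSubgroup.closure genΦ :=
          hGsmul r ((0 : M.carrier), x) hx
        rwa [LMod.smul_zero'] at h2
      intro n hn
      let K0 : AddSubgroup N.carrier :=
        { carrier := {n : N.carrier | ((0 : M.carrier), n) ∈ AddSubgroup.closure genΦ}
          add_mem' := by
            intro a b ha hb
            have h9 := AddSubgroup.add_mem (AddSubgroup.closure genΦ) ha hb
            rwa [Prod.mk_add_mk, add_zero] at h9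
          zero_mem' := show ((0 : M.carrier), (0 : N.carrier)) ∈ AddSubgroup.closure genΦ
            from AddSubgroup.zero_mem _
          neg_mem' := by
            intro a ha
            have h9 := AddSubgroup.neg_mem (AddSubgroup.closure genΦ) ha
            rwa [Prod.neg_mk, neg_zero] at h9 }
      refine hst K0 (fun r x hx => hstable r x hx) ?_ n hn
      intro s f hfK
      obtain ⟨w', hw'i, hw's⟩ := HasLocalUnits.exists_unit ({s} : Finset ↥S)
      have h1 : w' * s = s := (hw's s (Finset.mem_singleton_self s)).1
      have hw'val : (w' : LinMap R P P) * (w' : LinMap R P P) = (w' : LinMap R P P) :=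
        congrArg Subtype.val hw'i
      obtain ⟨nb, b, v, hdb⟩ := dualbasis (w' : LinMap R P P) w'.2 hw'val
      apply LinMap.ext; funext x
      show (s • f).1 x = (0 : LinMap R P N.carrier).1 x
      show (s • f).1 x = 0
      have hws : w' • (s • f) = s • f := by rw [← LMod.mul_smul', h1]
      have hKmem : ∀ t, ((0 : M.carrier), (s • f).1 (b t)) ∈ AddSubgroup.closure genΦ := by
        intro t
        have h5 : (s • f).1 (b t) = f.1 ((s : LinMap R P P).1 (b t)) := by
          rw [LinMap.pre_smul_apply, hact s (b t)]
        rw [h5]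
        exact hfK _
      calc (s • f).1 x = (s • f).1 ((w' : LinMap R P P).1 x) := by
            conv_lhs => rw [← hws]
            rw [LinMap.pre_smul_apply, hact w' x]
        _ = (s • f).1 (∑ t, (v t).1 ((w' : LinMap R P P).1 x) • b t) := by rw [← hdb x]
        _ = ∑ t, (v t).1 ((w' : LinMap R P P).1 x) • (s • f).1 (b t) := by
            rw [LinMap.map_sum']
            exact Finset.sum_congr rfl fun t _ => (s • f).2.map_smul _ _
        _ = 0 := Finset.sum_eq_zero fun t _ => claimA _ (hKmem t) w' (v t) x
    -- uniqueness
    have huniq : ∀ (m : M.carrier) (n n' : N.carrier),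
        (m, n) ∈ AddSubgroup.closure genΦ → (m, n') ∈ AddSubgroup.closure genΦ → n = n' := by
      intro m n n' h1 h2
      have h3 := AddSubgroup.sub_mem _ h1 h2
      rw [Prod.mk_sub_mk, sub_self] at h3
      exact sub_eq_zero.mp (hWD _ h3)
    -- the trace as a unitary module
    have hTunit : IsUnitary R ↥(sTrSub R ↥S P M.carrier) := by
      have key : ∀ m ∈ sTrSub R ↥S P M.carrier, ∃ e : R, e * e = e ∧ e • m = m := by
        refine exists_idem_smul_closure ?_
        rintro x ⟨f0, hf0, p, rfl⟩
        obtain ⟨e, he, hep⟩ := exists_idem_smul hPu p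
        exact ⟨e, he, by rw [← f0.2.map_smul, hep]⟩
      intro t
      obtain ⟨e, he, het⟩ := key t.1 t.2
      have h1 : t = e • t := Subtype.ext het.symm
      rw [h1]
      exact AddSubgroup.subset_closure ⟨e, t, rfl⟩
    -- the restriction of the would-be g to the trace
    choose g0 hg0spec using fun (t : ↥(sTrSub R ↥S P M.carrier)) => hGex t.1 t.2
    have hg0add : ∀ a b, g0 (a + b) = g0 a + g0 b := by
      intro a b
      have h1 : ((a.1 + b.1 : M.carrier), g0 (a + b)) ∈ AddSubgroup.closure genΦ :=
        hg0spec (a + b)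
      have h2 : ((a.1 + b.1 : M.carrier), g0 a + g0 b) ∈ AddSubgroup.closure genΦ := by
        have := AddSubgroup.add_mem _ (hg0spec a) (hg0spec b)
        rwa [Prod.mk_add_mk] at this
      exact huniq _ _ _ h1 h2
    have hg0smul : ∀ (r : R) a, g0 (r • a) = r • g0 a := by
      intro r a
      have h1 : ((r • a.1 : M.carrier), g0 (r • a)) ∈ AddSubgroup.closure genΦ :=
        hg0spec (r • a)
      have h2 : ((r • a.1 : M.carrier), r • g0 a) ∈ AddSubgroup.closure genΦ :=
        hGsmul r (a.1, g0 a) (hg0spec a)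
      exact huniq _ _ _ h1 h2
    -- extend along the inclusion using injectivity of N
    have hmono : Mono (show ({ carrier := ↥(sTrSub R ↥S P M.carrier), unitary := hTunit }
        : UMod.{u, u} R) ⟶ M from ⟨Subtype.val, ⟨fun _ _ => rfl, fun _ _ => rfl⟩⟩) :=
      UMod.mono_of_injective _ Subtype.val_injective
    haveI := hmono
    haveI : CategoryTheory.Injective N := hinj
    obtain ⟨gg, hgg⟩ := CategoryTheory.Injective.factors
      (show ({ carrier := ↥(sTrSub R ↥S P M.carrier), unitary := hTunit }
        : UMod.{u, u} R) ⟶ N from ⟨g0, ⟨hg0add, hg0smul⟩⟩)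
      (show ({ carrier := ↥(sTrSub R ↥S P M.carrier), unitary := hTunit }
        : UMod.{u, u} R) ⟶ M from ⟨Subtype.val, ⟨fun _ _ => rfl, fun _ _ => rfl⟩⟩)
    refine ⟨gg, ?_⟩
    show sHomLin (S := ↥S) (P := P) gg = Φ
    apply LinMap.ext; funext α
    apply Subtype.ext; apply LinMap.ext; funext x
    show gg.1 (α.1.1 x) = (Φ.1 α).1.1 x
    have htr : α.1.1 x ∈ sTrSub R ↥S P M.carrier :=
      AddSubgroup.subset_closure ⟨α.1, α.2, x, rfl⟩
    have h6 : gg.1 (α.1.1 x) = g0 ⟨α.1.1 x, htr⟩ :=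
      congrFun (congrArg Subtype.val hgg) ⟨α.1.1 x, htr⟩
    rw [h6]
    exact huniq (α.1.1 x) _ _ (hg0spec ⟨α.1.1 x, htr⟩)
      (AddSubgroup.subset_closure ⟨α, x, rfl⟩)
end

section
/- Let R and S be rings with local units and let P be a unitary R-S-bimodule. Then the following are equivalent: (a) P is a generator in RMod; (b) for each unitary left R-module M, sTr(P,M) = M; (c) for each unitary left R-module M, the canonical R-module homomorphism ⊕_{SHom_R(P,M)} P → M, (x_α)_α ↦ Σ_α (x_α)α, is an epimorphism; (d) for each unitary left R-module M there exist an index set I and an R-module epimorphism ⊕_I P → M. -/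
set_option linter.unusedVariables false

/-! ### Core: non-unital rings with local units, modules, homomorphisms, categories -/

universe u v w

open MulOpposite CategoryTheory

/-! Since `P = P·S`, every homomorphism `g : P → M` satisfies `(x·s)g = (x)(s·g)` with
`s·g ∈ SHom_R(P,M)`, so the image of every homomorphism `P → M` lies in `sTr(P,M)`. If `P`
is a generator, the projection `M → M/sTr(P,M)` is therefore killed by every map from `P`,
hence is zero. Conversely the image of the canonical map `⊕_{SHom_R(P,M)} P → M` contains
`sTr(P,M)`, and an epimorphism `⊕_I P → M` lets two maps `M → B` be separated on one
summand `P`. -/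

section quotient

variable {R : Type u} [NonUnitalRing R] {M : Type v} [AddCommGroup M] [LMod R M]

abbrev quotLMod (K : AddSubgroup M) (hK : ∀ (r : R) (x : M), x ∈ K → r • x ∈ K) :
    LMod R (M ⧸ K) where
  smul r := QuotientAddGroup.map K K (AddMonoidHom.mk' (r • ·) (LMod.smul_add' r))
    (fun x hx => hK r x hx)
  smul_add' r m n := map_add _ m n
  add_smul' r s m := QuotientAddGroup.induction_on m fun x => by
    show (((r + s) • x : M) : M ⧸ K) = ((r • x : M) : M ⧸ K) + ((s • x : M) : M ⧸ K)
    rw [LMod.add_smul']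
    rfl
  mul_smul' r s m := QuotientAddGroup.induction_on m fun x => by
    show (((r * s) • x : M) : M ⧸ K) = ((r • (s • x) : M) : M ⧸ K)
    rw [LMod.mul_smul']

theorem quotLMod_unitary (K : AddSubgroup M) (hK : ∀ (r : R) (x : M), x ∈ K → r • x ∈ K)
    (hM : IsUnitary R M) : letI := quotLMod K hK; IsUnitary R (M ⧸ K) := by
  let _ := quotLMod K hK
  intro q
  induction q using QuotientAddGroup.induction_on with
  | H m =>
    induction hM m using AddSubgroup.closure_induction with
    | mem y hy =>
      obtain ⟨r, n, rfl⟩ := hy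
      exact AddSubgroup.subset_closure ⟨r, (n : M ⧸ K), rfl⟩
    | zero => exact AddSubgroup.zero_mem _
    | add y z _ _ ihy ihz => exact AddSubgroup.add_mem _ ihy ihz
    | neg y _ ihy => exact AddSubgroup.neg_mem _ ihy

end quotient

theorem DFinsupp.single_lmod_smul {R : Type u} [NonUnitalRing R] {M : Type v} [AddCommGroup M]
    [LMod R M] {I : Type*} [DecidableEq I] (r : R) (i : I) (x : M) :
    (DFinsupp.single i (r • x) : Π₀ _i : I, M) = r • DFinsupp.single i x := by
  ext j
  rw [DFinsupp.lmod_smul_apply]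
  rcases eq_or_ne i j with rfl | h
  · rw [DFinsupp.single_eq_same, DFinsupp.single_eq_same]
  · rw [DFinsupp.single_eq_of_ne h.symm, DFinsupp.single_eq_of_ne h.symm, LMod.smul_zero']

namespace LinMap

variable {R : Type u} [NonUnitalRing R] {M : Type v} {N : Type w} [AddCommGroup M]
  [AddCommGroup N] [LMod R M] [LMod R N]

def toAddMonoidHom (f : LinMap R M N) : M →+ N := AddMonoidHom.mk' f.1 f.2.map_add

def comp {K : Type*} [AddCommGroup K] [LMod R K] (g : LinMap R N K) (f : LinMap R M N) :
    LinMap R M K :=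
  ⟨fun x => g.1 (f.1 x),
    ⟨fun x y => by rw [f.2.map_add, g.2.map_add], fun r x => by rw [f.2.map_smul, g.2.map_smul]⟩⟩

def single {I : Type*} [DecidableEq I] (i : I) : LinMap R M (Π₀ _i : I, M) :=
  ⟨fun x => DFinsupp.single i x, ⟨fun x y => DFinsupp.single_add (β := fun _ => M) i x y,
    fun r x => DFinsupp.single_lmod_smul r i x⟩⟩

noncomputable def lsum {I : Type u} (φ : I → LinMap R M N) : LinMap R (Π₀ _i : I, M) N :=
  ⟨dfinsuppSum fun i => (φ i).toAddMonoidHom, ⟨map_add _, fun r x => by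
    classical
    unfold dfinsuppSum
    induction x using DFinsupp.induction with
    | h0 => rw [LMod.smul_zero', map_zero, LMod.smul_zero']
    | ha i b x _ _ ih =>
      rw [LMod.smul_add', ← DFinsupp.single_lmod_smul, map_add, map_add,
        DFinsupp.sumAddHom_single, DFinsupp.sumAddHom_single, ih, toAddMonoidHom,
        AddMonoidHom.mk'_apply, (φ i).2.map_smul, LMod.smul_add']⟩⟩

theorem lsum_single {I : Type u} [DecidableEq I] (φ : I → LinMap R M N) (i : I) (x : M) :
    (lsum φ).1 (DFinsupp.single i x) = (φ i).1 x := by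
  unfold lsum dfinsuppSum
  convert DFinsupp.sumAddHom_single (β := fun _ => M) (fun i => (φ i).toAddMonoidHom) i x
  rfl

end LinMap

section trace

variable {R S : Type u} [NonUnitalRing R] [NonUnitalRing S]
  {P : Type u} [AddCommGroup P] [LMod R P] [LMod Sᵐᵒᵖ P] [SMulCommClass R Sᵐᵒᵖ P]
  {M : Type u} [AddCommGroup M] [LMod R M]

theorem LinMap.apply_mem_sTrSub (hr : IsUnitary Sᵐᵒᵖ P) (g : LinMap R P M) (x : P) :
    g.1 x ∈ sTrSub R S P M := by
  induction hr x using AddSubgroup.closure_induction with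
  | mem y hy =>
    obtain ⟨s, p, rfl⟩ := hy
    have hg : g.1 (s • p) = (s.unop • g).1 p := by rw [LinMap.pre_smul_apply, op_unop]
    rw [hg]
    exact AddSubgroup.subset_closure ⟨s.unop • g, smul_mem_umax s.unop g, p, rfl⟩
  | zero => rw [g.2.map_zero]; exact AddSubgroup.zero_mem _
  | add y z _ _ ihy ihz => rw [g.2.map_add]; exact AddSubgroup.add_mem _ ihy ihz
  | neg y _ ihy => rw [g.2.map_neg]; exact AddSubgroup.neg_mem _ ihy

theorem sTrSub_le_range_lsum :
    sTrSub R S P M ≤ (LinMap.lsum fun α : SHom R S P M => α.1).toAddMonoidHom.range := by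
  refine AddSubgroup.closure_le _ |>.2 ?_
  rintro _ ⟨g, hg, x, rfl⟩
  classical
  exact ⟨DFinsupp.single (β := fun _ : SHom R S P M => P) ⟨g, hg⟩ x, LinMap.lsum_single _ _ x⟩

end trace

section generator

variable {R : Type u} [NonUnitalRing R]

theorem IsGenerator.mem_of_forall_apply_mem {P : UMod.{u, v} R} (hP : IsGenerator R P)
    {M : UMod.{u, v} R} (K : AddSubgroup M) (hK : ∀ (r : R) (x : M), x ∈ K → r • x ∈ K)
    (hPK : ∀ (h : P ⟶ M) (x : P), h.1 x ∈ K) (m : M) : m ∈ K := by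
  by_contra hm
  let _ := quotLMod K hK
  let Q : UMod.{u, v} R := ⟨M ⧸ K, quotLMod_unitary K hK M.unitary⟩
  let π : M ⟶ Q := ⟨QuotientAddGroup.mk, ⟨fun _ _ => rfl, fun _ _ => rfl⟩⟩
  have hπ : π ≠ 0 := fun h =>
    hm ((QuotientAddGroup.eq_zero_iff m).1 (congrFun (congrArg Subtype.val h) m))
  obtain ⟨h, hne⟩ := hP M Q π 0 hπ
  exact hne (LinMap.ext (funext fun x => (QuotientAddGroup.eq_zero_iff _).2 (hPK h x)))

theorem isGenerator_of_forall_surjective {P : UMod.{u, v} R}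
    (hP : ∀ M : UMod.{u, v} R, ∃ I : Type v,
      ∃ g : LinMap R (Π₀ _i : I, P) M.carrier, Function.Surjective g.1) :
    IsGenerator R P := by
  intro M B f g hfg
  by_contra! hfPg
  obtain ⟨I, π, hπ⟩ := hP M
  classical
  have hsum :
      f.toAddMonoidHom.comp π.toAddMonoidHom = g.toAddMonoidHom.comp π.toAddMonoidHom :=
    DFinsupp.addHom_ext fun i x => by
      have := congrFun (congrArg Subtype.val (hfPg (π.comp (LinMap.single i)))) x
      change f.1 (π.1 (DFinsupp.single i x)) = g.1 (π.1 (DFinsupp.single i x)) at this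
      exact this
  exact hfg (LinMap.ext (hπ.injective_comp_right (congrArg DFunLike.coe hsum)))

end generator

theorem generator_characterisations_general
    (R S : Type u) [NonUnitalRing R] [NonUnitalRing S]
    (P : Type u) [AddCommGroup P] [LMod R P] [LMod Sᵐᵒᵖ P] [SMulCommClass R Sᵐᵒᵖ P]
    (hl : IsUnitary R P) (hr : IsUnitary Sᵐᵒᵖ P) :
    -- (a) ↔ (b):
    (IsGenerator R ⟨P, hl⟩ ↔
      ∀ M : UMod.{u, u} R, ∀ m : M.carrier, m ∈ sTrSub R S P M.carrier) ∧
    -- (a) ↔ (c): the canonical homomorphism `⊕_{SHom_R(P,M)} P → M`,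
    -- `(x_α)_α ↦ Σ_α (x_α)α`, is an epimorphism
    (IsGenerator R ⟨P, hl⟩ ↔
      ∀ M : UMod.{u, u} R, Function.Surjective
        (fun h : Π₀ _α : SHom R S P M.carrier, P =>
          dfinsuppSum (fun α : SHom R S P M.carrier =>
            AddMonoidHom.mk' α.1.1 α.1.2.map_add) h)) ∧
    -- (a) ↔ (d):
    (IsGenerator R ⟨P, hl⟩ ↔
      ∀ M : UMod.{u, u} R, ∃ I : Type u,
        ∃ g : LinMap R (Π₀ _i : I, P) M.carrier, Function.Surjective g.1) := by
  have hab : IsGenerator R ⟨P, hl⟩ → ∀ M : UMod.{u, u} R, ∀ m : M.carrier, m ∈ sTrSub R S P M :=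
    fun ha M => ha.mem_of_forall_apply_mem _ (fun _ _ => sTrSub_smul_stable _)
      (LinMap.apply_mem_sTrSub hr)
  -- condition (c) is, after unfolding, surjectivity of `LinMap.lsum (·.1)`
  have hbc : (∀ M : UMod.{u, u} R, ∀ m : M.carrier, m ∈ sTrSub R S P M) →
      ∀ M : UMod.{u, u} R, Function.Surjective (LinMap.lsum fun α : SHom R S P M => α.1).1 :=
    fun hb M m => sTrSub_le_range_lsum (hb M m)
  have hcd : (∀ M : UMod.{u, u} R,
      Function.Surjective (LinMap.lsum fun α : SHom R S P M => α.1).1) →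
      ∀ M : UMod.{u, u} R, ∃ I : Type u,
        ∃ g : LinMap R (Π₀ _i : I, P) M.carrier, Function.Surjective g.1 :=
    fun hc M => ⟨_, _, hc M⟩
  have hda := isGenerator_of_forall_surjective (P := ⟨P, hl⟩)
  exact ⟨⟨hab, hda ∘ hcd ∘ hbc⟩, ⟨hbc ∘ hab, hda ∘ hcd⟩, ⟨hcd ∘ hbc ∘ hab, hda⟩⟩

theorem generator_characterisations
    (R S : Type u) [NonUnitalRing R] [NonUnitalRing S]
    [HasLocalUnits R] [HasLocalUnits S]
    (P : Type u) [AddCommGroup P] [LMod R P] [LMod Sᵐᵒᵖ P] [SMulCommClass R Sᵐᵒᵖ P]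
    (hl : IsUnitary R P) (hr : IsUnitary Sᵐᵒᵖ P) :
    -- (a) ↔ (b):
    (IsGenerator R ⟨P, hl⟩ ↔
      ∀ M : UMod.{u, u} R, ∀ m : M.carrier, m ∈ sTrSub R S P M.carrier) ∧
    -- (a) ↔ (c): the canonical homomorphism `⊕_{SHom_R(P,M)} P → M`,
    -- `(x_α)_α ↦ Σ_α (x_α)α`, is an epimorphism
    (IsGenerator R ⟨P, hl⟩ ↔
      ∀ M : UMod.{u, u} R, Function.Surjective
        (fun h : Π₀ _α : SHom R S P M.carrier, P =>
          dfinsuppSum (fun α : SHom R S P M.carrier =>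
            AddMonoidHom.mk' α.1.1 α.1.2.map_add) h)) ∧
    -- (a) ↔ (d):
    (IsGenerator R ⟨P, hl⟩ ↔
      ∀ M : UMod.{u, u} R, ∃ I : Type u,
        ∃ g : LinMap R (Π₀ _i : I, P) M.carrier, Function.Surjective g.1) :=
  generator_characterisations_general R S P hl hr
end
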